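/- arXiv:2402.11049 — 6 statements merged into one kernel-verified Lean document; each statement's English description precedes it below -/
import Mathlib

section
/- Let S be a finite nonempty set of primes. If there exists a minimal open subgroup H of GL₂(ℤ_S) (i.e., a finite-index closed subgroup of finite level that is minimal), then S = {2}. -/
/-!
Suppose some `p ∈ S` is odd. The open subgroup `H` contains a principal congruence subgroup,
and minimality passes to its finite image `G` in `∏ GL₂(ℤ/p^N)`: if a proper subgroup of `G`
had full determinant, its preimage in `H`, enlarged by diagonal matrices of the congruence
kernel, would be a proper closed subgroup of `H` with full determinant. So every maximal
subgroup of `G` contains the kernel of `det` and is normal, i.e. all Sylow subgroups of `G` are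
normal. The `p`-torsion elements `1 + p^a Y` lie in `G` for every `Y`; an element of `q`-power
order (`q ≠ p`) commutes with all of them, hence is scalar modulo `p` and has square determinant
mod `p`, while elements of `p`-power order have determinant `1` mod `p`. As `G` is generated by
its Sylow subgroups, `det` mod `p` takes only square values on `G`, which is impossible for odd
`p` since `det` is onto `(ℤ/p)ˣ`.
-/

section FiniteGroup

variable {G : Type*} [Group G]

theorem MonoidHom.ker_le_of_isCoatom {A : Type*} [CommGroup A] {f : G →* A}
    (hf : Function.Surjective f) (hmin : ∀ K : Subgroup G, K.map f = ⊤ → K = ⊤)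
    {M : Subgroup G} (hM : IsCoatom M) : f.ker ≤ M := by
  by_contra h
  have hsup : M ⊔ f.ker = ⊤ := hM.2 _ (left_lt_sup.mpr h)
  refine hM.1 (hmin M ?_)
  rw [← Subgroup.map_top_of_surjective f hf, Subgroup.map_eq_map_iff, hsup, top_sup_eq]

theorem Sylow.normal_of_forall_map_eq_top [Finite G] {A : Type*} [CommGroup A] {f : G →* A}
    (hf : Function.Surjective f) (hmin : ∀ K : Subgroup G, K.map f = ⊤ → K = ⊤)
    {p : ℕ} [Fact p.Prime] (P : Sylow p G) : (P : Subgroup G).Normal :=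
  Sylow.normal_of_all_max_subgroups_normal (fun M hM => by
    rw [← Subgroup.comap_map_eq_self (f.ker_le_of_isCoatom hf hmin hM)]
    exact (Subgroup.normal_of_isMulCommutative _).comap f) P

theorem Subgroup.eq_top_of_forall_sylow_le [Finite G] {K : Subgroup G}
    (hK : ∀ (p : ℕ) [Fact p.Prime] (P : Sylow p G), (P : Subgroup G) ≤ K) : K = ⊤ := by
  rw [← Subgroup.index_eq_one, Nat.eq_one_iff_not_exists_prime_dvd]
  intro p hp hdvd
  have := Fact.mk hp
  obtain ⟨P⟩ : Nonempty (Sylow p G) := inferInstance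
  exact P.not_dvd_index (hdvd.trans (Subgroup.index_dvd_of_le (hK p P)))

theorem Sylow.commute_of_pow_eq_one [Finite G]
    (hnormal : ∀ (r : ℕ) [Fact r.Prime] (R : Sylow r G), (R : Subgroup G).Normal)
    {p q : ℕ} [Fact p.Prime] [Fact q.Prime] (hqp : q ≠ p) (Q : Sylow q G) {x m : G}
    (hx : x ∈ Q) (hm : m ^ p = 1) : Commute x m := by
  have hpm : IsPGroup p (Subgroup.zpowers m) := by
    rintro ⟨_, k, rfl⟩
    exact ⟨1, Subtype.ext (by
      rw [pow_one, Subgroup.coe_pow, ← zpow_natCast, ← zpow_mul, mul_comm, zpow_mul,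
        zpow_natCast, hm, one_zpow, OneMemClass.coe_one])⟩
  obtain ⟨P, hP⟩ := hpm.exists_le_sylow
  exact Subgroup.commute_of_normal_of_disjoint _ _ (hnormal q Q) (hnormal p P)
    (IsPGroup.disjoint_of_ne q p hqp _ _ Q.isPGroup' P.isPGroup') x m hx
    (hP (Subgroup.mem_zpowers m))

theorem MonoidHom.map_eq_one_of_pow_eq_one_of_coprime {H : Type*} [Group H] [Finite H]
    {p k : ℕ} (hp : (Nat.card H).Coprime p) (ρ : G →* H) {x : G} (hx : x ^ p ^ k = 1) :
    ρ x = 1 :=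
  orderOf_eq_one_iff.mp <| Nat.eq_one_of_dvd_coprimes (hp.pow_right k) (orderOf_dvd_natCard _)
    (orderOf_dvd_of_pow_eq_one (by rw [← map_pow, hx, map_one]))

end FiniteGroup

theorem Units.isSquare_iff_isSquare_val {M : Type*} [CommMonoid M] (u : Mˣ) :
    IsSquare u ↔ IsSquare (u : M) := by
  refine ⟨fun ⟨r, h⟩ => ⟨r, by rw [h, Units.val_mul]⟩, fun ⟨r, h⟩ => ?_⟩
  have hr : IsUnit r := isUnit_of_mul_isUnit_left (h ▸ u.isUnit)
  exact ⟨hr.unit, Units.ext (by rw [h, Units.val_mul, IsUnit.unit_spec])⟩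

theorem one_add_pow_of_sq_eq_zero {R : Type*} [Semiring R] {N : R} (hN : N ^ 2 = 0) (k : ℕ) :
    (1 + N) ^ k = 1 + k * N := by
  induction k with
  | zero => simp
  | succ k ih =>
    rw [pow_succ, ih, add_mul, one_mul, mul_add, mul_one, mul_assoc, ← sq, hN, mul_zero,
      add_zero, Nat.cast_succ, add_one_mul, add_assoc, add_comm N]

instance Matrix.compactSpace {m n R : Type*} [TopologicalSpace R] [CompactSpace R] :
    CompactSpace (Matrix m n R) :=
  inferInstanceAs (CompactSpace (m → n → R))

open Matrix.GeneralLinearGroup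

section GeneralLinearGroup

variable {d R S : Type*} [Fintype d] [DecidableEq d] [CommRing R] [CommRing S]

theorem Matrix.GeneralLinearGroup.map_surjective [IsLocalRing R] [Nontrivial S] {f : R →+* S}
    (hf : Function.Surjective f) : Function.Surjective (map (n := d) f) := by
  have := IsLocalHom.of_surjective f hf
  intro g
  choose M hM using fun i j => hf (g i j)
  have hMg : f.mapMatrix (Matrix.of M) = g := Matrix.ext hM
  have hM : IsUnit (Matrix.of M) := by
    rw [Matrix.isUnit_iff_isUnit_det]
    refine isUnit_of_map_unit f _ ?_
    rw [RingHom.map_det, hMg]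
    exact g.isUnit.map Matrix.detMonoidHom
  exact ⟨hM.unit, Units.ext hMg⟩

theorem Matrix.GeneralLinearGroup.exists_det_eq_and_map_eq_one [Nonempty d] (f : R →+* S)
    {u : Rˣ} (hu : Units.map f.toMonoidHom u = 1) : ∃ g : GL d R, det g = u ∧ map f g = 1 := by
  obtain ⟨j⟩ := ‹Nonempty d›
  let diag : (d → Rˣ) →* GL d R :=
    (Units.map (Matrix.diagonalRingHom d R).toMonoidHom).comp MulEquiv.piUnits.symm.toMonoidHom
  refine ⟨diag (Pi.mulSingle j u), ?_, ?_⟩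
  · ext
    simp [diag, ← Units.coe_prod]
  · have hu' : f u = 1 := by simpa using congr_arg Units.val hu
    ext i k
    rcases eq_or_ne i k with rfl | hik
    · rcases eq_or_ne i j with rfl | hij <;> simp [diag, *]
    · simp [diag, hik]

end GeneralLinearGroup

section ZModPrimePow

variable {d : Type*} [Fintype d] [DecidableEq d] {p a : ℕ} [Fact p.Prime]

theorem ZMod.castHom_eq_zero_of_pow_mul_eq_zero {z : ZMod (p ^ (a + 1))}
    (h : (p : ZMod (p ^ (a + 1))) ^ a * z = 0) :
    ZMod.castHom (dvd_pow_self p a.succ_ne_zero) (ZMod p) z = 0 := by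
  have hp : 0 < p := (Fact.out : p.Prime).pos
  have : NeZero (p ^ (a + 1)) := ⟨(pow_pos hp _).ne'⟩
  have hdvd : p ^ a * p ∣ p ^ a * z.val := by
    rw [← pow_succ, ← ZMod.natCast_eq_zero_iff]
    push_cast
    rwa [ZMod.natCast_zmod_val]
  rw [← ZMod.natCast_zmod_val z, map_natCast, ZMod.natCast_eq_zero_iff]
  exact Nat.dvd_of_mul_dvd_mul_left (pow_pos hp a) hdvd

theorem Matrix.mem_range_scalar_of_forall_commute_one_add {V : Matrix d d (ZMod (p ^ (a + 1)))}
    (hV : ∀ Y, Commute V (1 + (p : ZMod (p ^ (a + 1))) ^ a • Y)) :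
    V.map (ZMod.castHom (dvd_pow_self p a.succ_ne_zero) (ZMod p)) ∈
      Set.range (Matrix.scalar d) := by
  refine Matrix.mem_range_scalar_of_commute_single fun i j _ => ?_
  set π := ZMod.castHom (dvd_pow_self p a.succ_ne_zero) (ZMod p)
  set E : Matrix d d (ZMod (p ^ (a + 1))) := Matrix.single i j 1
  have hE : E.map π = Matrix.single i j 1 := by simp [E]
  have hpE : (p : ZMod (p ^ (a + 1))) ^ a • (V * E - E * V) = 0 := by
    have h := (hV E).eq
    rw [mul_add, add_mul, mul_one, one_mul, add_right_inj, mul_smul_comm, smul_mul_assoc] at h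
    rw [smul_sub, h, sub_self]
  have hred : (V * E - E * V).map π = 0 := by
    ext k l
    exact ZMod.castHom_eq_zero_of_pow_mul_eq_zero (by simpa using congr_fun₂ hpE k l)
  rw [Matrix.map_sub _ (map_sub π), Matrix.map_mul, Matrix.map_mul, hE, sub_eq_zero] at hred
  exact hred.symm

theorem Matrix.GeneralLinearGroup.exists_val_eq_one_add_pow_smul (ha : a ≠ 0)
    (Y : Matrix d d (ZMod (p ^ (a + 1)))) :
    ∃ U : GL d (ZMod (p ^ (a + 1))),
      (U : Matrix d d (ZMod (p ^ (a + 1)))) = 1 + (p : ZMod (p ^ (a + 1))) ^ a • Y ∧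
      U ^ p = 1 ∧
      map (ZMod.castHom (pow_dvd_pow p a.le_succ) (ZMod (p ^ a))) U = 1 := by
  have hsq : ((p : ZMod (p ^ (a + 1))) ^ a • Y) ^ 2 = 0 := by
    rw [smul_pow, ← pow_mul, ZMod.natCast_pow_eq_zero_of_le p (by omega), zero_smul]
  have hpow : (1 + (p : ZMod (p ^ (a + 1))) ^ a • Y) ^ p = 1 := by
    rw [one_add_pow_of_sq_eq_zero hsq, ← nsmul_eq_mul,
      ← Nat.cast_smul_eq_nsmul (ZMod (p ^ (a + 1))), smul_smul, ← pow_succ',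
      ZMod.natCast_pow_eq_zero_of_le p le_rfl, zero_smul, add_zero]
  obtain ⟨U, hU⟩ := IsUnit.of_pow_eq_one hpow (Fact.out : p.Prime).ne_zero
  refine ⟨U, hU, Units.ext (by rw [Units.val_pow_eq_pow_val, hU, hpow, Units.val_one]), ?_⟩
  ext i j
  rw [Matrix.GeneralLinearGroup.map_apply, hU, Matrix.add_apply, Matrix.smul_apply,
    smul_eq_mul, map_add, map_mul, map_pow, map_natCast,
    ZMod.natCast_pow_eq_zero_of_le p le_rfl, zero_mul, add_zero]
  rcases eq_or_ne i j with rfl | hij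
  · rw [Units.val_one, Matrix.one_apply_eq, map_one, Matrix.one_apply_eq]
  · rw [Units.val_one, Matrix.one_apply_ne hij, map_zero, Matrix.one_apply_ne hij]

section Sylow

variable {G : Type*} [Group G] [Finite G]
  (hnormal : ∀ (r : ℕ) [Fact r.Prime] (R : Sylow r G), (R : Subgroup G).Normal)
  (φ : G →* GL (Fin 2) (ZMod (p ^ (a + 1))))
  (hφ : ∀ Y, ∃ m : G, m ^ p = 1 ∧
    (φ m : Matrix (Fin 2) (Fin 2) (ZMod (p ^ (a + 1)))) = 1 + (p : ZMod (p ^ (a + 1))) ^ a • Y)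
include hnormal hφ

theorem isSquare_unitsMap_det (g : G) :
    IsSquare (ZMod.unitsMap (dvd_pow_self p a.succ_ne_zero) (det (φ g))) := by
  set ρ : G →* (ZMod p)ˣ := (ZMod.unitsMap (dvd_pow_self p a.succ_ne_zero)).comp (det.comp φ)
  suffices h : (Subgroup.square (ZMod p)ˣ).comap ρ = ⊤ from
    Subgroup.mem_comap.mp (h ▸ Subgroup.mem_top g)
  refine Subgroup.eq_top_of_forall_sylow_le fun q _ Q x hx => ?_
  rw [Subgroup.mem_comap, Subgroup.mem_square]
  by_cases hqp : q = p
  · subst hqp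
    obtain ⟨k, hk⟩ := Q.isPGroup' ⟨x, hx⟩
    have hcop : (Nat.card (ZMod q)ˣ).Coprime q := by
      rw [Nat.card_eq_fintype_card, ZMod.card_units]
      exact (Nat.coprime_self_sub_left (Fact.out : q.Prime).one_le).mpr (Nat.coprime_one_left q)
    rw [ρ.map_eq_one_of_pow_eq_one_of_coprime hcop (k := k)
      (by simpa using congr_arg Subtype.val hk)]
    exact IsSquare.one
  · obtain ⟨r, hr⟩ := Matrix.mem_range_scalar_of_forall_commute_one_add
      (V := (φ x : Matrix (Fin 2) (Fin 2) (ZMod (p ^ (a + 1))))) fun Y => by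
        obtain ⟨m, hm, hφm⟩ := hφ Y
        rw [← hφm]
        exact ((Sylow.commute_of_pow_eq_one hnormal hqp Q hx hm).map φ).units_val
    rw [Units.isSquare_iff_isSquare_val]
    refine ⟨r, ?_⟩
    have hρ : (ρ x : ZMod p) = ((φ x : Matrix (Fin 2) (Fin 2) (ZMod (p ^ (a + 1)))).map
        (ZMod.castHom (dvd_pow_self p a.succ_ne_zero) (ZMod p))).det := by
      simp [ρ, ZMod.unitsMap_def, RingHom.map_det]
    rw [hρ, ← hr, Matrix.det_fin_two]
    simp

theorem eq_two_of_forall_sylow_normal (hdet : Function.Surjective (det.comp φ)) : p = 2 := by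
  by_contra hp2
  obtain ⟨b, hb⟩ := FiniteField.exists_nonsquare (F := ZMod p) (by rwa [ZMod.ringChar_zmod_n])
  have hb0 : b ≠ 0 := by rintro rfl; exact hb IsSquare.zero
  obtain ⟨u, hu⟩ := ZMod.unitsMap_surjective (dvd_pow_self p a.succ_ne_zero) (Units.mk0 b hb0)
  obtain ⟨g, rfl⟩ := hdet u
  have hsq := (Units.isSquare_iff_isSquare_val _).mp (isSquare_unitsMap_det hnormal φ hφ g)
  rw [← MonoidHom.comp_apply det φ, hu, Units.val_mk0] at hsq
  exact hb hsq

end Sylow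

end ZModPrimePow

section Padic

variable {p : ℕ} [Fact p.Prime]

theorem PadicInt.continuous_toZModPow (n : ℕ) :
    Continuous (PadicInt.toZModPow n : ℤ_[p] → ZMod (p ^ n)) := by
  refine continuous_discrete_rng.mpr fun c => isOpen_iff_mem_nhds.mpr fun x hx => ?_
  have hr : (0 : ℝ) < (p : ℝ) ^ (-(n : ℤ)) :=
    zpow_pos (by exact_mod_cast (Fact.out : p.Prime).pos) _
  refine Filter.mem_of_superset ((IsUltrametricDist.isOpen_closedBall x hr.ne').mem_nhds
    (Metric.mem_closedBall_self hr.le)) fun y hy => ?_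
  rw [Metric.mem_closedBall, dist_eq_norm, PadicInt.norm_le_pow_iff_mem_span_pow,
    ← PadicInt.ker_toZModPow, RingHom.mem_ker, map_sub, sub_eq_zero] at hy
  rwa [Set.mem_preimage, hy]

theorem PadicInt.unitsMap_toZModPow_surjective {n : ℕ} (hn : n ≠ 0) :
    Function.Surjective
      (Units.map (PadicInt.toZModPow n : ℤ_[p] →+* ZMod (p ^ n)).toMonoidHom) := by
  have : Nontrivial (ZMod (p ^ n)) :=
    ZMod.nontrivial_iff.mpr (Nat.one_lt_pow hn (Fact.out : p.Prime).one_lt).ne'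
  exact IsLocalRing.surjective_units_map_of_local_ringHom _ (ZMod.ringHom_surjective _)
    (.of_surjective _ (ZMod.ringHom_surjective _))

end Padic

theorem Subgroup.map_inf_comap_eq_top {𝔾 Q A B : Type*} [Group 𝔾] [Group Q] [Group A]
    [Group B] {π : 𝔾 →* Q} {δ : 𝔾 →* A} {δQ : Q →* B} {ρ : A →* B}
    (hcomm : δQ.comp π = ρ.comp δ) (hker : ρ.ker ≤ π.ker.map δ) {H : Subgroup 𝔾}
    (hH : π.ker ≤ H) {K : Subgroup Q} (hKH : K ≤ H.map π) (hK : K.map δQ = ⊤) :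
    (H ⊓ K.comap π).map δ = ⊤ := by
  refine eq_top_iff.mpr fun u _ => ?_
  obtain ⟨k, hk, hku⟩ : ρ u ∈ K.map δQ := hK ▸ Subgroup.mem_top _
  obtain ⟨h, hh, rfl⟩ := hKH hk
  have hρ : u * (δ h)⁻¹ ∈ ρ.ker := by
    rw [MonoidHom.mem_ker, map_mul, map_inv, ← hku, ← MonoidHom.comp_apply, hcomm,
      MonoidHom.comp_apply, mul_inv_cancel]
  obtain ⟨z, hz, hzu⟩ := hker hρ
  have hzh : π (z * h) ∈ K := by rwa [map_mul, MonoidHom.mem_ker.mp hz, one_mul]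
  refine ⟨z * h, Subgroup.mem_inf.mpr ⟨H.mul_mem (hH hz) hh, hzh⟩, ?_⟩
  rw [map_mul, hzu, inv_mul_cancel_right]

section Congruence

variable {ι d : Type*} [Fintype d] [DecidableEq d] (P : ι → ℕ) [∀ i, Fact (P i).Prime]

noncomputable def reduceModPow (n : ℕ) :
    (∀ i, GL d ℤ_[P i]) →* ∀ i, GL d (ZMod (P i ^ n)) :=
  MonoidHom.piMap fun _ => map (PadicInt.toZModPow n)

@[simp]
theorem reduceModPow_apply (n : ℕ) (g : ∀ i, GL d ℤ_[P i]) (i : ι) :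
    reduceModPow P n g i = map (PadicInt.toZModPow n) (g i) :=
  rfl

theorem continuous_reduceModPow (n : ℕ) : Continuous (reduceModPow (d := d) P n) :=
  continuous_pi fun i => (Continuous.units_map _
    (continuous_id.matrix_map (PadicInt.continuous_toZModPow n))).comp (continuous_apply i)

theorem map_castHom_reduceModPow {m n : ℕ} (h : n ≤ m) (g : ∀ i, GL d ℤ_[P i]) (i : ι) :
    map (ZMod.castHom (pow_dvd_pow (P i) h) (ZMod (P i ^ n))) (reduceModPow P m g i) =
      reduceModPow P n g i := by
  rw [reduceModPow_apply, reduceModPow_apply, ← MonoidHom.comp_apply, ← map_comp,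
    PadicInt.zmod_cast_comp_toZModPow _ _ h]

theorem ker_reduceModPow_antitone : Antitone fun n => (reduceModPow (d := d) P n).ker := by
  intro n m h g hg
  rw [MonoidHom.mem_ker] at hg ⊢
  funext i
  rw [← map_castHom_reduceModPow P h, hg, Pi.one_apply, map_one, Pi.one_apply]

theorem eq_one_of_forall_reduceModPow_eq_one {g : ∀ i, GL d ℤ_[P i]}
    (hg : ∀ n, reduceModPow P n g = 1) : g = 1 := by
  funext i
  ext j k
  refine PadicInt.ext_of_toZModPow.mp fun n => ?_
  have := congr_arg (fun x => x i j k) (hg n)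
  simpa [Matrix.one_apply, apply_ite] using this

theorem exists_ker_reduceModPow_le {H : Subgroup (∀ i, GL d ℤ_[P i])}
    (hH : IsOpen (H : Set (∀ i, GL d ℤ_[P i]))) : ∃ n, (reduceModPow P n).ker ≤ H := by
  set V : ℕ → Set (∀ i, GL d ℤ_[P i]) := fun n => (reduceModPow (d := d) P n).ker
  have hV : Antitone V := fun _ _ h => SetLike.coe_subset_coe.mpr (ker_reduceModPow_antitone P h)
  refine exists_subset_nhds_of_compactSpace hV.directed_ge
    (fun n => isClosed_singleton.preimage (continuous_reduceModPow P n)) fun g hg => ?_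
  rw [eq_one_of_forall_reduceModPow_eq_one P fun n => Set.mem_iInter.mp hg n]
  exact hH.mem_nhds H.one_mem

theorem piMap_det_comp_reduceModPow (n : ℕ) :
    (MonoidHom.piMap fun _ => det).comp (reduceModPow (d := d) P n) =
      (MonoidHom.piMap fun i => Units.map (PadicInt.toZModPow (p := P i) n).toMonoidHom).comp
        (MonoidHom.piMap fun _ => det) := by
  ext g i : 2
  exact Matrix.GeneralLinearGroup.map_det _ _

theorem ker_unitsMap_le_map_ker_reduceModPow [Nonempty d] (n : ℕ) :
    (MonoidHom.piMap fun i => Units.map (PadicInt.toZModPow (p := P i) n).toMonoidHom).ker ≤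
      (reduceModPow (d := d) P n).ker.map (MonoidHom.piMap fun _ => det) := by
  intro u hu
  choose g hdet hred using fun i => exists_det_eq_and_map_eq_one (d := d) _ (congr_fun hu i)
  exact ⟨g, funext hred, funext hdet⟩

theorem exists_reduceModPow_eq_mulSingle (i₀ : ι) {a : ℕ} (ha : a ≠ 0)
    (Y : Matrix d d (ZMod (P i₀ ^ (a + 1)))) :
    ∃ g : ∀ i, GL d ℤ_[P i], reduceModPow P a g = 1 ∧
      reduceModPow P (a + 1) g ^ P i₀ = 1 ∧
      (reduceModPow P (a + 1) g i₀ : Matrix d d (ZMod (P i₀ ^ (a + 1)))) =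
        1 + (P i₀ : ZMod (P i₀ ^ (a + 1))) ^ a • Y := by
  classical
  obtain ⟨U, hUval, hUpow, hUcast⟩ := exists_val_eq_one_add_pow_smul ha Y
  have : Nontrivial (ZMod (P i₀ ^ (a + 1))) :=
    ZMod.nontrivial_iff.mpr (Nat.one_lt_pow a.succ_ne_zero (Fact.out : (P i₀).Prime).one_lt).ne'
  obtain ⟨B, hB⟩ := map_surjective (ZMod.ringHom_surjective (PadicInt.toZModPow (a + 1))) U
  have hred : reduceModPow P (a + 1) (Pi.mulSingle i₀ B) = Pi.mulSingle i₀ U := by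
    funext i
    rcases eq_or_ne i i₀ with rfl | hi
    · simp [hB]
    · simp [hi]
  refine ⟨Pi.mulSingle i₀ B, ?_, ?_, ?_⟩
  · funext i
    rw [← map_castHom_reduceModPow P a.le_succ, hred]
    rcases eq_or_ne i i₀ with rfl | hi
    · simp [hUcast]
    · simp [hi]
  · rw [hred, ← Pi.mulSingle_pow, hUpow, Pi.mulSingle_one]
  · rw [hred, Pi.mulSingle_eq_same, hUval]

end Congruence

section Minimal

variable {ι d : Type*} [Fintype d] [DecidableEq d] (P : ι → ℕ) [∀ i, Fact (P i).Prime]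
  {H : Subgroup (∀ i, GL d ℤ_[P i])}

theorem surjective_det_map_reduceModPow (hdet : H.map (MonoidHom.piMap fun _ => det) = ⊤)
    {n : ℕ} (hn : n ≠ 0) :
    Function.Surjective
      ((MonoidHom.piMap fun _ => det).comp (H.map (reduceModPow P n)).subtype) := by
  intro v
  choose u hu using fun i => PadicInt.unitsMap_toZModPow_surjective (p := P i) hn (v i)
  obtain ⟨h, hh, hhu⟩ : u ∈ H.map (MonoidHom.piMap fun _ => det) :=
    hdet ▸ Subgroup.mem_top u
  refine ⟨⟨reduceModPow P n h, Subgroup.mem_map_of_mem _ hh⟩, ?_⟩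
  rw [MonoidHom.comp_apply, Subgroup.subtype_apply, ← MonoidHom.comp_apply,
    piMap_det_comp_reduceModPow, MonoidHom.comp_apply, hhu]
  exact funext hu

theorem eq_top_of_map_det_eq_top [Finite ι] [Nonempty d]
    (hcl : IsClosed (H : Set (∀ i, GL d ℤ_[P i])))
    (hmin : ∀ K : Subgroup (∀ i, GL d ℤ_[P i]), IsClosed (K : Set (∀ i, GL d ℤ_[P i])) →
      K < H → K.map (MonoidHom.piMap fun _ => det) ≠ ⊤)
    {n : ℕ} (hn : (reduceModPow P n).ker ≤ H) (K : Subgroup (H.map (reduceModPow P n)))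
    (hK : K.map ((MonoidHom.piMap fun _ => det).comp (H.map (reduceModPow P n)).subtype) = ⊤) :
    K = ⊤ := by
  set K' := (K.map (H.map (reduceModPow P n)).subtype).comap (reduceModPow P n)
  have hdetK : (H ⊓ K').map (MonoidHom.piMap fun _ => det) = ⊤ :=
    Subgroup.map_inf_comap_eq_top (piMap_det_comp_reduceModPow P n)
      (ker_unitsMap_le_map_ker_reduceModPow P n) hn (Subgroup.map_subtype_le K)
      (by rwa [Subgroup.map_map])
  have hclosed : IsClosed ((H ⊓ K' : Subgroup _) : Set (∀ i, GL d ℤ_[P i])) :=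
    hcl.inter ((isClosed_discrete (K.map (H.map (reduceModPow P n)).subtype :
      Set (∀ i, GL d (ZMod (P i ^ n))))).preimage (continuous_reduceModPow P n))
  have hHK : H ≤ K' := inf_eq_left.mp
    ((inf_le_left.lt_or_eq).resolve_left fun hlt => hmin _ hclosed hlt hdetK)
  rw [eq_top_iff]
  rintro ⟨_, h, hh, rfl⟩ -
  obtain ⟨k, hk, hkx⟩ := hHK hh
  rwa [show k = ⟨reduceModPow P n h, _⟩ from Subtype.ext hkx] at hk

theorem eq_two_of_minimal [Finite ι] {H : Subgroup (∀ i, GL (Fin 2) ℤ_[P i])}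
    (hcl : IsClosed (H : Set (∀ i, GL (Fin 2) ℤ_[P i])))
    (hop : IsOpen (H : Set (∀ i, GL (Fin 2) ℤ_[P i])))
    (hdet : H.map (MonoidHom.piMap fun _ => det) = ⊤)
    (hmin : ∀ K : Subgroup (∀ i, GL (Fin 2) ℤ_[P i]),
      IsClosed (K : Set (∀ i, GL (Fin 2) ℤ_[P i])) → K < H →
        K.map (MonoidHom.piMap fun _ => det) ≠ ⊤)
    (i₀ : ι) : P i₀ = 2 := by
  obtain ⟨n, hn⟩ := exists_ker_reduceModPow_le P hop
  have hker : (reduceModPow P (n + 2)).ker ≤ H :=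
    (ker_reduceModPow_antitone P (by omega)).trans hn
  -- At level `n + 2` the matrices `1 + p ^ (n + 1) Y` are `p`-torsion and lie in `H`.
  have hsurj := surjective_det_map_reduceModPow P hdet (n := n + 2) (by omega)
  refine eq_two_of_forall_sylow_normal (a := n + 1)
    (fun r _ R => Sylow.normal_of_forall_map_eq_top hsurj
      (eq_top_of_map_det_eq_top P hcl hmin hker) R)
    ((Pi.evalMonoidHom _ i₀).comp (H.map (reduceModPow P (n + 2))).subtype)
    (fun Y => ?_) ((Function.surjective_eval i₀).comp hsurj)
  obtain ⟨g, hg1, hgp, hgY⟩ := exists_reduceModPow_eq_mulSingle P i₀ (a := n + 1) (by omega) Y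
  have hgH : g ∈ H := hn (ker_reduceModPow_antitone P (by omega) hg1)
  exact ⟨⟨_, Subgroup.mem_map_of_mem _ hgH⟩, Subtype.ext hgp, hgY⟩

end Minimal

/-- Let `S` be a finite nonempty set of primes, and consider
`GL₂(ℤ_S) = ∏_{p ∈ S} GL₂(ℤ_p)` with componentwise determinant
`det : GL₂(ℤ_S) → ℤ_Sˣ = ∏_{p ∈ S} ℤ_pˣ`.  If there exists a minimal open subgroup `H`
of `GL₂(ℤ_S)` (a finite-index closed subgroup, of finite level, i.e. open, such that
`det(H) = ℤ_Sˣ` but `det(K) ≠ ℤ_Sˣ` for every proper closed subgroup `K` of `H`),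
then `S = {2}`. -/
theorem minimal_implies_S_eq_two (S : Finset ℕ) (hne : S.Nonempty)
    (hprime : ∀ p ∈ S, Nat.Prime p) :
    (haveI : ∀ p : {x // x ∈ S}, Fact (Nat.Prime p.1) := fun p => ⟨hprime p.1 p.2⟩
      ∃ H : Subgroup (∀ p : {x // x ∈ S}, GL (Fin 2) ℤ_[p.1]),
        IsClosed (H : Set (∀ p : {x // x ∈ S}, GL (Fin 2) ℤ_[p.1])) ∧
        IsOpen (H : Set (∀ p : {x // x ∈ S}, GL (Fin 2) ℤ_[p.1])) ∧
        H.index ≠ 0 ∧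
        Subgroup.map
          (Pi.monoidHom fun p : {x // x ∈ S} =>
            Matrix.GeneralLinearGroup.det.comp
              (Pi.evalMonoidHom (fun q : {x // x ∈ S} => GL (Fin 2) ℤ_[q.1]) p)) H = ⊤ ∧
        ∀ K : Subgroup (∀ p : {x // x ∈ S}, GL (Fin 2) ℤ_[p.1]),
          IsClosed (K : Set (∀ p : {x // x ∈ S}, GL (Fin 2) ℤ_[p.1])) → K < H →
          Subgroup.map
            (Pi.monoidHom fun p : {x // x ∈ S} =>
              Matrix.GeneralLinearGroup.det.comp
                (Pi.evalMonoidHom (fun q : {x // x ∈ S} => GL (Fin 2) ℤ_[q.1]) p)) K ≠ ⊤) →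
    S = {2} := by
  have : ∀ p : {x // x ∈ S}, Fact (Nat.Prime p.1) := fun p => ⟨hprime p.1 p.2⟩
  rintro ⟨H, hcl, hop, -, hdet, hmin⟩
  have htwo : ∀ p (hp : p ∈ S), p = 2 := fun p hp =>
    eq_two_of_minimal (fun q : S => q.1) hcl hop hdet hmin ⟨p, hp⟩
  obtain ⟨q, hq⟩ := hne
  exact Finset.eq_singleton_iff_unique_mem.mpr ⟨htwo q hq ▸ hq, htwo⟩
end

section
/- If G ⊆ GL₂(ℤ₂) is a minimal subgroup, then G is topologically generated by 2 elements; that is, there exist A, B ∈ G such that G is the topological closure of the subgroup generated by A and B. -/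
open Matrix Filter Topology

noncomputable section MinimalAux

namespace MinimalAux

lemma isUnit_five : IsUnit (5 : ℤ_[2]) := by
  rw [PadicInt.isUnit_iff]
  have h1 : ‖(5 : ℤ_[2])‖ ≤ 1 := PadicInt.norm_le_one _
  have h2 : ¬ ‖(5 : ℤ_[2])‖ < 1 := by
    intro h
    have h5 : ((5 : ℤ) : ℤ_[2]) = (5 : ℤ_[2]) := by norm_cast
    rw [← h5, PadicInt.norm_int_lt_one_iff_dvd] at h
    norm_num at h
  rcases lt_or_eq_of_le h1 with h | h
  · exact absurd h h2
  · exact h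

/-- the unit `5` of `ℤ₂`. -/
def five : ℤ_[2]ˣ := isUnit_five.unit

@[simp] lemma val_five : (five : ℤ_[2]) = 5 := isUnit_five.unit_spec

lemma not_isUnit_two : ¬ IsUnit (2 : ℤ_[2]) := by
  rw [PadicInt.not_isUnit_iff]
  have h : ‖((2 : ℕ) : ℤ_[2])‖ = ((2 : ℕ) : ℝ)⁻¹ := PadicInt.norm_p
  rw [show ((2 : ℕ) : ℤ_[2]) = (2 : ℤ_[2]) by norm_cast] at h
  rw [h]
  norm_num

/-- every 2-adic integer is even or odd. -/
lemma dvd_or (x : ℤ_[2]) : (2 : ℤ_[2]) ∣ x ∨ (2 : ℤ_[2]) ∣ (x - 1) := by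
  obtain ⟨n, hn, hmem⟩ := PadicInt.exists_mem_range (p := 2) (x := x)
  rw [PadicInt.maximalIdeal_eq_span_p, Ideal.mem_span_singleton] at hmem
  rw [show ((2 : ℕ) : ℤ_[2]) = (2 : ℤ_[2]) by norm_cast] at hmem
  interval_cases n
  · left; simpa using hmem
  · right; simpa using hmem

lemma odd_mul {x y : ℤ_[2]} (hx : (2 : ℤ_[2]) ∣ x - 1) (hy : (2 : ℤ_[2]) ∣ y - 1) :
    (2 : ℤ_[2]) ∣ x * y - 1 := by
  have h : x * y - 1 = (x - 1) * (y - 1) + (x - 1) + (y - 1) := by ring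
  rw [h]
  exact dvd_add (dvd_add (hx.mul_right _) hx) hy

lemma five_pow_int (m : ℕ) : ∃ t : ℤ, (2 : ℤ) ∣ t - 1 ∧ (5 : ℤ) ^ (2 ^ m) = 1 + 2 ^ (m + 2) * t := by
  induction m with
  | zero => exact ⟨1, by norm_num, by norm_num⟩
  | succ m ih =>
    obtain ⟨t, ht, h⟩ := ih
    refine ⟨t + 2 ^ (m + 1) * t ^ 2, ?_, ?_⟩
    · have e : t + 2 ^ (m + 1) * t ^ 2 - 1 = (t - 1) + 2 * (2 ^ m * t ^ 2) := by ring
      rw [e]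
      exact dvd_add ht ⟨_, rfl⟩
    · have e : (5 : ℤ) ^ (2 ^ (m + 1)) = ((5 : ℤ) ^ (2 ^ m)) ^ 2 := by
        rw [← pow_mul, pow_succ]
      rw [e, h]
      ring

lemma five_pow_padic (m : ℕ) :
    ∃ t : ℤ_[2], (2 : ℤ_[2]) ∣ t - 1 ∧ (5 : ℤ_[2]) ^ (2 ^ m) = 1 + 2 ^ (m + 2) * t := by
  obtain ⟨t, ht, h⟩ := five_pow_int m
  refine ⟨(t : ℤ_[2]), ?_, ?_⟩
  · obtain ⟨c, hc⟩ := ht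
    refine ⟨(c : ℤ_[2]), ?_⟩
    have h2 := congrArg (fun z : ℤ => (z : ℤ_[2])) hc
    push_cast at h2
    exact h2
  · have h2 := congrArg (fun z : ℤ => (z : ℤ_[2])) h
    push_cast at h2
    exact h2

lemma approx (u : ℤ_[2]ˣ) (k : ℕ) (hk : 2 ≤ k) :
    ∃ (n : ℕ) (σ : ℤ_[2]), (σ = 1 ∨ σ = -1) ∧ (2 : ℤ_[2]) ^ k ∣ ((u : ℤ_[2]) - σ * 5 ^ n) := by
  induction k, hk using Nat.le_induction with
  | base =>
    have hu : ¬ (2 : ℤ_[2]) ∣ (u : ℤ_[2]) := by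
      intro h
      exact not_isUnit_two (isUnit_of_dvd_unit h u.isUnit)
    rcases dvd_or (u : ℤ_[2]) with h | h
    · exact absurd h hu
    obtain ⟨t, ht⟩ := h
    rcases dvd_or t with ⟨s, hs⟩ | ⟨s, hs⟩
    · refine ⟨0, 1, Or.inl rfl, s, ?_⟩
      rw [pow_two]
      calc (u : ℤ_[2]) - 1 * 5 ^ 0 = (u : ℤ_[2]) - 1 := by ring
        _ = 2 * t := ht
        _ = 2 * (2 * s) := by rw [hs]
        _ = 2 * 2 * s := by ring
    · refine ⟨0, -1, Or.inr rfl, s + 1, ?_⟩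
      rw [pow_two]
      calc (u : ℤ_[2]) - (-1) * 5 ^ 0 = ((u : ℤ_[2]) - 1) + 2 := by ring
        _ = 2 * t + 2 := by rw [ht]
        _ = 2 * (t - 1) + 4 := by ring
        _ = 2 * (2 * s) + 4 := by rw [hs]
        _ = 2 * 2 * (s + 1) := by ring
  | succ k hk ih =>
    obtain ⟨n, σ, hσ, c, hc⟩ := ih
    have hu : (u : ℤ_[2]) = 2 ^ k * c + σ * 5 ^ n := by
      rw [← hc]; ring
    rcases dvd_or c with ⟨d, hd⟩ | ⟨d, hd⟩
    · refine ⟨n, σ, hσ, d, ?_⟩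
      rw [hu, hd, pow_succ]
      ring
    · obtain ⟨t, ht, h5⟩ := five_pow_padic (k - 2)
      have hk2 : k - 2 + 2 = k := Nat.sub_add_cancel hk
      rw [hk2] at h5
      have hodd5 : (2 : ℤ_[2]) ∣ (5 : ℤ_[2]) ^ n - 1 := by
        have h4 : (5 : ℤ_[2]) - 1 ∣ (5 : ℤ_[2]) ^ n - 1 ^ n := sub_dvd_pow_sub_pow 5 1 n
        rw [one_pow] at h4
        exact dvd_trans ⟨2, by norm_num⟩ h4
      have hoddσ : (2 : ℤ_[2]) ∣ σ - 1 := by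
        rcases hσ with rfl | rfl
        · simp
        · exact ⟨-1, by ring⟩
      have hoddprod : (2 : ℤ_[2]) ∣ σ * 5 ^ n * t - 1 :=
        odd_mul (odd_mul hoddσ hodd5) ht
      obtain ⟨e, he⟩ : (2 : ℤ_[2]) ∣ (c - σ * 5 ^ n * t) := by
        have h' : c - σ * 5 ^ n * t = (c - 1) - (σ * 5 ^ n * t - 1) := by ring
        rw [h']
        exact dvd_sub ⟨d, hd⟩ hoddprod
      refine ⟨n + 2 ^ (k - 2), σ, hσ, e, ?_⟩
      have key : (u : ℤ_[2]) - σ * 5 ^ (n + 2 ^ (k - 2)) = 2 ^ k * (c - σ * 5 ^ n * t) := by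
        rw [hu, pow_add, h5]
        ring
      rw [key, he, pow_succ]
      ring

/-- Any 2-adic unit is approximated by elements of the subgroup generated by `-1` and `5`. -/
lemma approx' (u : ℤ_[2]ˣ) (k : ℕ) :
    ∃ h : ℤ_[2]ˣ, h ∈ Subgroup.closure ({-1, five} : Set ℤ_[2]ˣ) ∧
      ‖(u : ℤ_[2]) - (h : ℤ_[2])‖ ≤ (1 / 2 : ℝ) ^ k := by
  obtain ⟨n, σ, hσ, hdvd⟩ := approx u (k + 2) (by omega)
  have h5mem : five ∈ Subgroup.closure ({-1, five} : Set ℤ_[2]ˣ) :=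
    Subgroup.subset_closure (by simp)
  have hneg : (-1 : ℤ_[2]ˣ) ∈ Subgroup.closure ({-1, five} : Set ℤ_[2]ˣ) :=
    Subgroup.subset_closure (by simp)
  have norm_bound : ∀ x : ℤ_[2], (2 : ℤ_[2]) ^ (k + 2) ∣ x → ‖x‖ ≤ (1 / 2 : ℝ) ^ k := by
    intro x hx
    have hmem : x ∈ Ideal.span ({((2 : ℕ) : ℤ_[2]) ^ (k + 2)} : Set ℤ_[2]) := by
      rw [Ideal.mem_span_singleton]
      rw [show ((2 : ℕ) : ℤ_[2]) = (2 : ℤ_[2]) by norm_cast]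
      exact hx
    have := (PadicInt.norm_le_pow_iff_mem_span_pow x (k + 2)).mpr hmem
    refine le_trans this ?_
    rw [show ((2 : ℕ) : ℝ) = (2 : ℝ) by norm_cast]
    rw [show ((1 : ℝ) / 2) ^ k = (2 : ℝ) ^ (-(k : ℤ)) by
      rw [_root_.zpow_neg, zpow_natCast, ← inv_pow, one_div]]
    apply zpow_le_zpow_right₀ (by norm_num)
    omega
  rcases hσ with rfl | rfl
  · refine ⟨five ^ n, Subgroup.pow_mem _ h5mem n, ?_⟩
    have hv : ((five ^ n : ℤ_[2]ˣ) : ℤ_[2]) = 5 ^ n := by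
      rw [Units.val_pow_eq_pow_val, val_five]
    rw [hv]
    apply norm_bound
    simpa using hdvd
  · refine ⟨(-1) * five ^ n, Subgroup.mul_mem _ hneg (Subgroup.pow_mem _ h5mem n), ?_⟩
    have hv : (((-1) * five ^ n : ℤ_[2]ˣ) : ℤ_[2]) = (-1) * 5 ^ n := by
      rw [Units.val_mul, Units.val_pow_eq_pow_val, val_five, Units.val_neg, Units.val_one]
    rw [hv]
    apply norm_bound
    exact hdvd

lemma norm_inv_sub_inv (h u : ℤ_[2]ˣ) :
    ‖((h⁻¹ : ℤ_[2]ˣ) : ℤ_[2]) - ((u⁻¹ : ℤ_[2]ˣ) : ℤ_[2])‖ = ‖(u : ℤ_[2]) - (h : ℤ_[2])‖ := by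
  have e1 : ((u : ℤ_[2]) * ((u⁻¹ : ℤ_[2]ˣ) : ℤ_[2])) = 1 := by
    rw [← Units.val_mul, mul_inv_cancel, Units.val_one]
  have e2 : (((h⁻¹ : ℤ_[2]ˣ) : ℤ_[2]) * (h : ℤ_[2])) = 1 := by
    rw [← Units.val_mul, inv_mul_cancel, Units.val_one]
  have key : ((h⁻¹ : ℤ_[2]ˣ) : ℤ_[2]) - ((u⁻¹ : ℤ_[2]ˣ) : ℤ_[2]) =
      ((h⁻¹ : ℤ_[2]ˣ) : ℤ_[2]) * ((u : ℤ_[2]) - (h : ℤ_[2])) * ((u⁻¹ : ℤ_[2]ˣ) : ℤ_[2]) := by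
    linear_combination (-((h⁻¹ : ℤ_[2]ˣ) : ℤ_[2])) * e1 + (((u⁻¹ : ℤ_[2]ˣ) : ℤ_[2])) * e2
  rw [key, norm_mul, norm_mul, PadicInt.norm_units, PadicInt.norm_units,
    one_mul, mul_one]

/-- A closed subgroup of `ℤ₂ˣ` containing `-1` and `5` is everything. -/
lemma closed_subgroup_eq_top (H : Subgroup ℤ_[2]ˣ) (hcl : IsClosed (H : Set ℤ_[2]ˣ))
    (h1 : (-1 : ℤ_[2]ˣ) ∈ H) (h5 : five ∈ H) : H = ⊤ := by
  rw [eq_top_iff]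
  intro u _
  have hsub : Subgroup.closure ({-1, five} : Set ℤ_[2]ˣ) ≤ H := by
    rw [Subgroup.closure_le]
    rintro x hx
    rcases hx with rfl | hx
    · exact h1
    · rw [Set.mem_singleton_iff] at hx; subst hx; exact h5
  choose f hfmem hfnorm using approx' u
  have hnorm0 : Tendsto (fun k => ‖(u : ℤ_[2]) - (f k : ℤ_[2])‖) atTop (𝓝 0) := by
    apply squeeze_zero (fun k => norm_nonneg _) hfnorm
    exact tendsto_pow_atTop_nhds_zero_of_lt_one (by norm_num) (by norm_num)
  have hval : Tendsto (fun k => ((f k : ℤ_[2]ˣ) : ℤ_[2])) atTop (𝓝 (u : ℤ_[2])) := by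
    rw [tendsto_iff_norm_sub_tendsto_zero]
    simpa [norm_sub_rev] using hnorm0
  have hinv : Tendsto (fun k => (((f k)⁻¹ : ℤ_[2]ˣ) : ℤ_[2])) atTop (𝓝 ((u⁻¹ : ℤ_[2]ˣ) : ℤ_[2])) := by
    rw [tendsto_iff_norm_sub_tendsto_zero]
    have : (fun k => ‖(((f k)⁻¹ : ℤ_[2]ˣ) : ℤ_[2]) - ((u⁻¹ : ℤ_[2]ˣ) : ℤ_[2])‖) =
        fun k => ‖(u : ℤ_[2]) - (f k : ℤ_[2])‖ := by
      funext k; exact norm_inv_sub_inv (f k) u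
    rw [this]
    exact hnorm0
  have htends : Tendsto f atTop (𝓝 u) := by
    rw [Units.isInducing_embedProduct.tendsto_nhds_iff]
    rw [nhds_prod_eq]
    apply Tendsto.prodMk
    · exact hval
    · exact (MulOpposite.continuous_op.tendsto _).comp hinv
  exact hcl.mem_of_tendsto htends (Filter.Eventually.of_forall fun k => hsub (hfmem k))

section Compactness

variable {M : Type*} [Monoid M] [TopologicalSpace M] [T2Space M] [ContinuousMul M]

lemma isClosed_range_embedProduct : IsClosed (Set.range (Units.embedProduct M)) := by
  have hrange : Set.range (Units.embedProduct M) =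
      {x : M × Mᵐᵒᵖ | x.1 * x.2.unop = 1 ∧ x.2.unop * x.1 = 1} := by
    ext ⟨a, b⟩
    constructor
    · rintro ⟨v, hv⟩
      have h1 : a = (v : M) := congrArg Prod.fst hv.symm
      have h2 : b = MulOpposite.op ((v⁻¹ : Mˣ) : M) := congrArg Prod.snd hv.symm
      subst h1; subst h2
      constructor
      · simp [v.mul_inv]
      · simp [v.inv_mul]
    · rintro ⟨hab, hba⟩
      exact ⟨⟨a, b.unop, hab, hba⟩, by simp [Units.embedProduct]⟩
  rw [hrange]
  have hc1 : Continuous (fun x : M × Mᵐᵒᵖ => x.1 * x.2.unop) :=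
    continuous_fst.mul (MulOpposite.continuous_unop.comp continuous_snd)
  have hc2 : Continuous (fun x : M × Mᵐᵒᵖ => x.2.unop * x.1) :=
    (MulOpposite.continuous_unop.comp continuous_snd).mul continuous_fst
  exact (isClosed_eq hc1 continuous_const).inter (isClosed_eq hc2 continuous_const)

lemma units_compactSpace [CompactSpace M] : CompactSpace Mˣ := by
  haveI : CompactSpace Mᵐᵒᵖ := MulOpposite.opHomeomorph.compactSpace
  constructor
  rw [Units.isEmbedding_embedProduct.isCompact_iff, Set.image_univ]
  exact (isClosed_range_embedProduct (M := M)).isCompact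

end Compactness

instance : CompactSpace (Matrix (Fin 2) (Fin 2) ℤ_[2]) :=
  (inferInstance : CompactSpace (Fin 2 → Fin 2 → ℤ_[2]))

instance : CompactSpace (GL (Fin 2) ℤ_[2]) :=
  units_compactSpace (M := Matrix (Fin 2) (Fin 2) ℤ_[2])

lemma continuous_gl_det : Continuous (Matrix.GeneralLinearGroup.det :
    GL (Fin 2) ℤ_[2] → ℤ_[2]ˣ) := by
  rw [Units.continuous_iff]
  constructor
  · have h : (Units.val ∘ (Matrix.GeneralLinearGroup.det :
        GL (Fin 2) ℤ_[2] →* ℤ_[2]ˣ)) = fun g : GL (Fin 2) ℤ_[2] =>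
        Matrix.det (g : Matrix (Fin 2) (Fin 2) ℤ_[2]) := by
      funext g
      rfl
    rw [h]
    exact Units.continuous_val.matrix_det
  · have h : (fun g : GL (Fin 2) ℤ_[2] =>
        ((Matrix.GeneralLinearGroup.det g)⁻¹ : ℤ_[2]ˣ) : GL (Fin 2) ℤ_[2] → ℤ_[2]) =
        fun g : GL (Fin 2) ℤ_[2] =>
        Matrix.det (((g⁻¹ : GL (Fin 2) ℤ_[2])) : Matrix (Fin 2) (Fin 2) ℤ_[2]) := by
      funext g
      rfl
    rw [h]
    exact Units.continuous_coe_inv.matrix_det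

end MinimalAux

open MinimalAux

/-- A finite-index closed subgroup `G ⊆ GL₂(ℤ₂)` is *minimal* if `det(G) = ℤ₂ˣ` but
`det(K) ≠ ℤ₂ˣ` for every proper closed subgroup `K` of `G`. -/
def IsMinimal (G : Subgroup (GL (Fin 2) ℤ_[2])) : Prop :=
  IsClosed (G : Set (GL (Fin 2) ℤ_[2])) ∧ G.index ≠ 0 ∧
    Subgroup.map Matrix.GeneralLinearGroup.det G = ⊤ ∧
    ∀ K : Subgroup (GL (Fin 2) ℤ_[2]), IsClosed (K : Set (GL (Fin 2) ℤ_[2])) → K < G →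
      Subgroup.map Matrix.GeneralLinearGroup.det K ≠ ⊤

/-- If `G ⊆ GL₂(ℤ₂)` is a minimal subgroup, then `G` is topologically generated by two
elements: there are `A, B ∈ G` with `G` the topological closure of `⟨A, B⟩`. -/
theorem minimal_topologically_two_generated (G : Subgroup (GL (Fin 2) ℤ_[2]))
    (hG : IsMinimal G) :
    ∃ A B : GL (Fin 2) ℤ_[2], A ∈ G ∧ B ∈ G ∧
      G = (Subgroup.closure {A, B}).topologicalClosure := by
  obtain ⟨hGcl, -, hGdet, hGmin⟩ := hG
  obtain ⟨A, hAG, hAdet⟩ : ∃ A ∈ G, Matrix.GeneralLinearGroup.det A = (-1 : ℤ_[2]ˣ) := by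
    have : (-1 : ℤ_[2]ˣ) ∈ Subgroup.map Matrix.GeneralLinearGroup.det G := by
      rw [hGdet]; trivial
    simpa [Subgroup.mem_map] using this
  obtain ⟨B, hBG, hBdet⟩ : ∃ B ∈ G, Matrix.GeneralLinearGroup.det B = five := by
    have : five ∈ Subgroup.map Matrix.GeneralLinearGroup.det G := by
      rw [hGdet]; trivial
    simpa [Subgroup.mem_map] using this
  set K := (Subgroup.closure ({A, B} : Set (GL (Fin 2) ℤ_[2]))).topologicalClosure with hK
  have hABsub : ({A, B} : Set (GL (Fin 2) ℤ_[2])) ⊆ G := by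
    rintro x hx
    rcases hx with rfl | hx
    · exact hAG
    · rw [Set.mem_singleton_iff] at hx; subst hx; exact hBG
  have hKG : K ≤ G :=
    Subgroup.topologicalClosure_minimal _ (Subgroup.closure_le G |>.mpr hABsub) hGcl
  have hKcl : IsClosed (K : Set (GL (Fin 2) ℤ_[2])) :=
    Subgroup.isClosed_topologicalClosure _
  have hAK : A ∈ K :=
    Subgroup.le_topologicalClosure _ (Subgroup.subset_closure (by simp))
  have hBK : B ∈ K :=
    Subgroup.le_topologicalClosure _ (Subgroup.subset_closure (by simp))
  have hKdet : Subgroup.map Matrix.GeneralLinearGroup.det K = ⊤ := by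
    apply closed_subgroup_eq_top
    · have hKc : IsCompact (K : Set (GL (Fin 2) ℤ_[2])) := hKcl.isCompact
      have himg : IsCompact ((Matrix.GeneralLinearGroup.det :
          GL (Fin 2) ℤ_[2] → ℤ_[2]ˣ) '' (K : Set (GL (Fin 2) ℤ_[2]))) :=
        hKc.image continuous_gl_det
      have hcoe : ((Subgroup.map Matrix.GeneralLinearGroup.det K : Subgroup ℤ_[2]ˣ) :
          Set ℤ_[2]ˣ) = (Matrix.GeneralLinearGroup.det :
          GL (Fin 2) ℤ_[2] → ℤ_[2]ˣ) '' (K : Set (GL (Fin 2) ℤ_[2])) :=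
        Subgroup.coe_map _ _
      rw [hcoe]
      exact himg.isClosed
    · exact ⟨A, hAK, hAdet⟩
    · exact ⟨B, hBK, hBdet⟩
  have hKeq : K = G := by
    by_contra hne
    exact hGmin K hKcl (lt_of_le_of_ne hKG hne) hKdet
  exact ⟨A, B, hAG, hBG, hKeq.symm⟩
end MinimalAux
end

section
/- Let K be a closed subgroup of ℤ₂ˣ whose image under the reduction map ℤ₂ˣ → (ℤ/8ℤ)ˣ is all of (ℤ/8ℤ)ˣ. Then K = ℤ₂ˣ. -/
/-!
Write `U₃` for the units congruent to `1` modulo `8`; it is the kernel of the reduction map,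
so it suffices to show `U₃ ≤ K`. Pick `x ∈ K` with `x ≡ 5 [mod 8]`. Then `x ^ 2 ^ m - 1` has
valuation exactly `m + 2`, and this lets one adjust exponents one binary digit at a time: every
`w ∈ U₃` is a `2`-adic limit of powers of `x`. As `K` is closed, `w ∈ K`.
-/

open Set

theorem one_add_four_mul_pow_two_pow {R : Type*} [CommRing R] {u : R} (hu : Odd u) (m : ℕ) :
    ∃ v : R, Odd v ∧ (1 + 4 * u) ^ 2 ^ m = 1 + 2 ^ (m + 2) * v := by
  induction m with
  | zero => exact ⟨u, hu, by ring⟩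
  | succ m ih =>
    obtain ⟨v, hv, hpow⟩ := ih
    refine ⟨v + 2 ^ (m + 1) * v ^ 2, hv.add_even (by simp [pow_succ, mul_assoc]), ?_⟩
    rw [pow_succ, pow_mul, hpow]
    ring

namespace PadicInt

theorem toZModPow_eq_iff_dvd_sub {p : ℕ} [Fact p.Prime] (n : ℕ) (a b : ℤ_[p]) :
    toZModPow n a = toZModPow n b ↔ (p : ℤ_[p]) ^ n ∣ a - b := by
  rw [← RingHom.sub_mem_ker_iff, ker_toZModPow, Ideal.mem_span_singleton]

theorem even_or_odd (c : ℤ_[2]) : Even c ∨ Odd c := by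
  obtain ⟨n, hn, hmem⟩ := exists_mem_range (p := 2) c
  rw [maximalIdeal_eq_span_p, Ideal.mem_span_singleton] at hmem
  obtain ⟨d, hd⟩ := hmem
  interval_cases n
  · exact Or.inl (even_iff_two_dvd.mpr ⟨d, by simpa using hd⟩)
  · exact Or.inr ⟨d, by push_cast at hd; linear_combination hd⟩

/-- Each step either already gains a factor `2`, or multiplies by `x ^ 2 ^ (k + 1)`, which
changes `x ^ n` by exactly `2 ^ (k + 3)` times an odd number and so flips the offending digit. -/
theorem exists_two_pow_dvd_pow_sub {x w : ℤ_[2]} (hx : 2 ^ 3 ∣ x - 5) (hw : 2 ^ 3 ∣ w - 1)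
    (k : ℕ) : ∃ n : ℕ, 2 ^ (k + 3) ∣ x ^ n - w := by
  obtain ⟨s, hs⟩ := hx
  have hu : Odd (1 + 2 * s) := ⟨s, by ring⟩
  have hx : x = 1 + 4 * (1 + 2 * s) := by linear_combination hs
  have hx_odd : Odd x := hx ▸ ⟨2 * (1 + 2 * s), by ring⟩
  induction k with
  | zero => exact ⟨0, by rw [zero_add, pow_zero, ← neg_sub]; exact dvd_neg.mpr hw⟩
  | succ k ih =>
    obtain ⟨n, c, hc⟩ := ih
    rcases even_or_odd c with ⟨d, rfl⟩ | hc_odd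
    · exact ⟨n, d, by rw [hc]; ring⟩
    · obtain ⟨v, hv, hpow⟩ := one_add_four_mul_pow_two_pow hu (k + 1)
      obtain ⟨e, he⟩ := (hc_odd.add_odd ((hx_odd.pow (n := n)).mul hv)).two_dvd
      refine ⟨n + 2 ^ (k + 1), e, ?_⟩
      calc x ^ (n + 2 ^ (k + 1)) - w
          = (x ^ n - w) + x ^ n * ((1 + 4 * (1 + 2 * s)) ^ 2 ^ (k + 1) - 1) := by
            rw [pow_add, hx]; ring
        _ = 2 ^ (k + 3) * (c + x ^ n * v) := by rw [hc, hpow]; ring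
        _ = 2 ^ (k + 1 + 3) * e := by rw [he]; ring

theorem mem_closure_range_pow {x w : ℤ_[2]} (hx : 2 ^ 3 ∣ x - 5) (hw : 2 ^ 3 ∣ w - 1) :
    w ∈ closure (range (x ^ · : ℕ → ℤ_[2])) := by
  refine Metric.mem_closure_range_iff.mpr fun ε hε => ?_
  obtain ⟨k, hk⟩ := exists_pow_lt_of_lt_one hε (by norm_num : (2⁻¹ : ℝ) < 1)
  obtain ⟨n, hn⟩ := exists_two_pow_dvd_pow_sub hx hw k
  refine ⟨n, lt_of_le_of_lt ?_ hk⟩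
  have := (norm_le_pow_iff_mem_span_pow (x ^ n - w) (k + 3)).mpr
    (Ideal.mem_span_singleton.mpr (by exact_mod_cast hn))
  rw [dist_comm, dist_eq_norm]
  calc ‖x ^ n - w‖ ≤ (2 : ℝ) ^ (-(k + 3 : ℕ) : ℤ) := by exact_mod_cast this
    _ ≤ 2⁻¹ ^ k := by
      rw [inv_pow, ← zpow_natCast, ← zpow_neg]
      exact zpow_le_zpow_right₀ (by norm_num) (by omega)

theorem units_mem_closure_range_pow {x w : ℤ_[2]ˣ} (hx : 2 ^ 3 ∣ (x : ℤ_[2]) - 5)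
    (hw : 2 ^ 3 ∣ (w : ℤ_[2]) - 1) : w ∈ closure (range (x ^ · : ℕ → ℤ_[2]ˣ)) := by
  rw [Units.isOpenEmbedding_val.isInducing.closure_eq_preimage_closure_image, ← range_comp]
  simpa [Function.comp_def] using mem_closure_range_pow hx hw

end PadicInt

/-- Let `K` be a closed subgroup of `ℤ₂ˣ` whose image under reduction modulo `8` is all of
`(ℤ/8ℤ)ˣ`.  Then `K = ℤ₂ˣ`. -/
theorem closed_subgroup_eq_top_of_surjects_mod_eight (K : Subgroup ℤ_[2]ˣ)
    (hclosed : IsClosed (K : Set ℤ_[2]ˣ))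
    (hsurj : Subgroup.map (Units.map (PadicInt.toZModPow 3).toMonoidHom) K = ⊤) :
    K = ⊤ := by
  set π := Units.map (PadicInt.toZModPow 3 : ℤ_[2] →+* ZMod (2 ^ 3)).toMonoidHom
  obtain ⟨x, hxK, hx⟩ : ∃ x ∈ K, π x = ZMod.unitOfCoprime 5 (by norm_num) :=
    hsurj ▸ Subgroup.mem_top _
  have hx5 : (2 : ℤ_[2]) ^ 3 ∣ (x : ℤ_[2]) - 5 := by
    refine mod_cast (PadicInt.toZModPow_eq_iff_dvd_sub 3 _ _).mp ?_
    rw [map_ofNat]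
    simpa [π] using congrArg Units.val hx
  have hker : π.ker ≤ K := fun w hw => by
    have hw1 : (2 : ℤ_[2]) ^ 3 ∣ (w : ℤ_[2]) - 1 := by
      refine mod_cast (PadicInt.toZModPow_eq_iff_dvd_sub 3 _ _).mp ?_
      simpa [π] using congrArg Units.val (π.mem_ker.mp hw)
    exact hclosed.closure_subset_iff.mpr (range_subset_iff.mpr (pow_mem hxK))
      (PadicInt.units_mem_closure_range_pow hx5 hw1)
  rw [← Subgroup.comap_map_eq_self hker, hsurj, Subgroup.comap_top]
end

section
/- If H is a minimal subgroup of GL₂(ℤ_S), then every maximal closed subgroup M of H satisfies M = (det|_H)⁻¹(det(M)), i.e., M is the full preimage in H under the determinant of its own determinant image; in particular, every maximal closed subgroup of H is normal in H. -/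
namespace Subgroup

variable {G A : Type*} [Group G] [Group A]

theorem normal_comap_inf_subgroupOf [IsMulCommutative A] (f : G →* A) (N : Subgroup A)
    (H : Subgroup G) : ((N.comap f ⊓ H).subgroupOf H).Normal := by
  rw [inf_subgroupOf_right]
  exact ((normal_of_isMulCommutative N).comap f).subgroupOf H

variable [TopologicalSpace G] [TopologicalSpace A]

theorem isClosed_comap_map_inf [CompactSpace G] [T2Space A] {f : G →* A} (hf : Continuous f)
    {M H : Subgroup G} (hM : IsClosed (M : Set G)) (hH : IsClosed (H : Set G)) :
    IsClosed (((M.map f).comap f ⊓ H : Subgroup G) : Set G) := by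
  have hMf : IsClosed ((M.map f : Subgroup A) : Set A) := by
    rw [coe_map]
    exact (hM.isCompact.image hf).isClosed
  exact (hMf.preimage hf).inter hH

theorem eq_comap_map_inf_of_maximal_closed [CompactSpace G] [T2Space A] {f : G →* A}
    (hf : Continuous f) {H M : Subgroup G} (hH : IsClosed (H : Set G)) (hHf : H.map f = ⊤)
    (hmin : ∀ K : Subgroup G, IsClosed (K : Set G) → K < H → K.map f ≠ ⊤)
    (hM : IsClosed (M : Set G)) (hMH : M < H)
    (hmax : ∀ K : Subgroup G, IsClosed (K : Set G) → M < K → K < H → False) :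
    M = (M.map f).comap f ⊓ H := by
  set K := (M.map f).comap f ⊓ H
  have hMK : M ≤ K := le_inf (le_comap_map f M) hMH.le
  have hKH : K < H := by
    refine lt_of_le_of_ne inf_le_right fun hKH => hmin M hM hMH ?_
    have hHM : H ≤ (M.map f).comap f := hKH ▸ inf_le_left
    exact top_le_iff.mp (hHf ▸ map_le_iff_le_comap.mpr hHM)
  by_contra hne
  exact hmax K (isClosed_comap_map_inf hf hM hH) (lt_of_le_of_ne hMK hne) hKH

end Subgroup

/-- If `H` is a minimal subgroup of `GL₂(ℤ_S) = ∏_{p ∈ S} GL₂(ℤ_p)` (i.e. a finite-index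
closed subgroup with `det(H) = ℤ_Sˣ` such that `det(K) ≠ ℤ_Sˣ` for every proper closed
subgroup `K` of `H`), then every maximal closed subgroup `M` of `H` is the full preimage in
`H` under `det` of its own determinant image; in particular every maximal closed subgroup of
`H` is normal in `H`. -/
theorem maximal_closed_subgroup_of_minimal_is_det_preimage (S : Finset ℕ)
    (hprime : ∀ p ∈ S, Nat.Prime p) :
    haveI : ∀ p : {x // x ∈ S}, Fact (Nat.Prime p.1) := fun p => ⟨hprime p.1 p.2⟩
    ∀ H : Subgroup (∀ p : {x // x ∈ S}, GL (Fin 2) ℤ_[p.1]),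
      -- `H` is minimal:
      IsClosed (H : Set (∀ p : {x // x ∈ S}, GL (Fin 2) ℤ_[p.1])) →
      H.index ≠ 0 →
      Subgroup.map
        (Pi.monoidHom fun p : {x // x ∈ S} =>
          Matrix.GeneralLinearGroup.det.comp
            (Pi.evalMonoidHom (fun q : {x // x ∈ S} => GL (Fin 2) ℤ_[q.1]) p)) H = ⊤ →
      (∀ K : Subgroup (∀ p : {x // x ∈ S}, GL (Fin 2) ℤ_[p.1]),
        IsClosed (K : Set (∀ p : {x // x ∈ S}, GL (Fin 2) ℤ_[p.1])) → K < H →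
        Subgroup.map
          (Pi.monoidHom fun p : {x // x ∈ S} =>
            Matrix.GeneralLinearGroup.det.comp
              (Pi.evalMonoidHom (fun q : {x // x ∈ S} => GL (Fin 2) ℤ_[q.1]) p)) K ≠ ⊤) →
      -- conclusion: every maximal closed subgroup `M` of `H` is the full preimage of its
      -- determinant image, and is normal in `H`
      ∀ M : Subgroup (∀ p : {x // x ∈ S}, GL (Fin 2) ℤ_[p.1]),
        IsClosed (M : Set (∀ p : {x // x ∈ S}, GL (Fin 2) ℤ_[p.1])) → M < H →
        (∀ K : Subgroup (∀ p : {x // x ∈ S}, GL (Fin 2) ℤ_[p.1]),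
          IsClosed (K : Set (∀ p : {x // x ∈ S}, GL (Fin 2) ℤ_[p.1])) → M < K → K < H →
            False) →
        M = (Subgroup.comap
              (Pi.monoidHom fun p : {x // x ∈ S} =>
                Matrix.GeneralLinearGroup.det.comp
                  (Pi.evalMonoidHom (fun q : {x // x ∈ S} => GL (Fin 2) ℤ_[q.1]) p))
              (Subgroup.map
                (Pi.monoidHom fun p : {x // x ∈ S} =>
                  Matrix.GeneralLinearGroup.det.comp
                    (Pi.evalMonoidHom (fun q : {x // x ∈ S} => GL (Fin 2) ℤ_[q.1]) p)) M))
            ⊓ H ∧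
          (M.subgroupOf H).Normal := by
  have : ∀ p : {x // x ∈ S}, Fact (Nat.Prime p.1) := fun p => ⟨hprime p.1 p.2⟩
  intro H hH _ hHdet hmin M hM hMH hmax
  have hMeq := Subgroup.eq_comap_map_inf_of_maximal_closed
    (continuous_pi fun p => Matrix.GeneralLinearGroup.continuous_det.comp (continuous_apply p))
    hH hHdet hmin hM hMH hmax
  exact ⟨hMeq, hMeq ▸ Subgroup.normal_comap_inf_subgroupOf _ _ H⟩
end

section
/- Let p be an odd prime, k a positive integer, and H a nilpotent subgroup of GL₂(ℤ/p^kℤ) which contains every matrix M ∈ GL₂(ℤ/p^kℤ) whose reduction modulo p^{k-1} is the identity. Then for every B ∈ H, the reduction of det(B) modulo p is a square in ℤ/pℤ; in particular, the determinant map det : H → (ℤ/p^kℤ)ˣ is not surjective. -/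
/-!
Reduce `B ∈ H` modulo `p` to `A ∈ GL₂(𝔽_p)`. With `c = p^(k-1)` (so `c² = 0` once `k ≥ 2`), the
matrices `1 + cX` lie in `H`, and `⁅B, 1 + cX⁆ = 1 + c(BXB⁻¹ - X)`. Nilpotency of `H` therefore
makes `W ↦ AWA⁻¹ - W`, hence also `ad A`, locally nilpotent on `M₂(𝔽_p)`. Since
`(ad A)³ = disc(A) • ad A` for `2 × 2` matrices, this forces `disc A = tr² A - 4 det A = 0`, so
`det A = (tr A / 2)²`. For `k = 1` the hypothesis makes `H` all of `GL₂(𝔽_p)`, which is not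
nilpotent: `diag(1, -1)` acts on the upper unipotent matrices by `x ↦ -2x`. A unit reducing to a
non-square mod `p` then is not a determinant from `H`.
-/

open Matrix
open scoped commutatorElement

theorem Group.IsNilpotent.exists_iterate_commutatorElement_eq_one {G : Type*} [Group G]
    [Group.IsNilpotent G] (b a : G) : ∃ n, (fun x => ⁅b, x⁆)^[n] a = 1 := by
  obtain ⟨n, hn⟩ := Subgroup.nilpotent_iff_lowerCentralSeries.mp ‹_›
  have mem (m : ℕ) : (fun x => ⁅b, x⁆)^[m] a ∈ (⊤ : Subgroup G).lowerCentralSeries m := by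
    induction m with
    | zero => exact Subgroup.mem_top a
    | succ m ih =>
      rw [Function.iterate_succ_apply', ← commutatorElement_inv]
      exact inv_mem (Subgroup.commutator_mem_commutator ih (Subgroup.mem_top b))
  exact ⟨n, by simpa [hn] using mem n⟩

namespace Units

variable {S : Type*} [Ring S]

def conjSub (u : Sˣ) (x : S) : S := u * x * ↑u⁻¹ - x

theorem iterate_conjSub (u : Sˣ) (n : ℕ) (x : S) :
    (conjSub u)^[n] x = (fun y => ⁅(u : S), y⁆)^[n] x * ↑(u⁻¹ ^ n) := by
  induction n with
  | zero => simp
  | succ n ih =>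
    have hcomm : (u : S) * ↑(u⁻¹ ^ n) = ↑(u⁻¹ ^ n) * u := by
      rw [← Units.val_mul, ← Units.val_mul, ((Commute.refl u).inv_right.pow_right n).eq]
    rw [Function.iterate_succ_apply', Function.iterate_succ_apply', ih, conjSub, Ring.lie_def,
      pow_succ, Units.val_mul, sub_mul, mul_assoc _ (u : S), ← mul_assoc (u : S) (↑(u⁻¹ ^ n)),
      hcomm]
    simp only [mul_assoc, Units.mul_inv, mul_one]

theorem semiconj_conjSub {S' : Type*} [Ring S'] (f : S →+* S') (u : Sˣ) :
    Function.Semiconj f (conjSub u) (conjSub (map (f : S →* S') u)) := fun x => by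
  simp [conjSub]

variable {R : Type*} [CommRing R] [Algebra R S] {c : R}

@[simps]
def oneAddSMul (hc : c * c = 0) (x : S) : Sˣ where
  val := 1 + c • x
  inv := 1 - c • x
  val_inv := by rw [add_mul, one_mul, mul_sub, mul_one, smul_mul_smul_comm, hc, zero_smul]; abel
  inv_val := by rw [sub_mul, one_mul, mul_add, mul_one, smul_mul_smul_comm, hc, zero_smul]; abel

theorem commutatorElement_oneAddSMul (hc : c * c = 0) (u : Sˣ) (x : S) :
    ⁅u, oneAddSMul hc x⁆ = oneAddSMul hc (conjSub u x) := by
  ext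
  change (u : S) * (1 + c • x) * ↑u⁻¹ * (1 - c • x) = 1 + c • (u * x * ↑u⁻¹ - x)
  have conj : (u : S) * (1 + c • x) * ↑u⁻¹ = 1 + c • (u * x * ↑u⁻¹) := by
    rw [mul_add, mul_one, add_mul, Units.mul_inv, mul_smul_comm, smul_mul_assoc]
  rw [conj, add_mul, one_mul, mul_sub, mul_one, smul_mul_smul_comm, hc, zero_smul, smul_sub]
  abel

end Units

theorem exists_smul_iterate_conjSub_eq_zero {R S : Type*} [CommRing R] [Ring S] [Algebra R S]
    {c : R} (hc : c * c = 0) {H : Subgroup Sˣ} [Group.IsNilpotent H]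
    (hH : ∀ x, Units.oneAddSMul hc x ∈ H) {u : Sˣ} (hu : u ∈ H) (x : S) :
    ∃ n, c • (Units.conjSub u)^[n] x = 0 := by
  let f (y : S) : H := ⟨Units.oneAddSMul hc y, hH y⟩
  have hf : Function.Semiconj f (Units.conjSub u) (fun g => ⁅(⟨u, hu⟩ : H), g⁆) :=
    fun y => Subtype.ext (Units.commutatorElement_oneAddSMul hc u y).symm
  obtain ⟨n, hn⟩ := Group.IsNilpotent.exists_iterate_commutatorElement_eq_one ⟨u, hu⟩ (f x)
  refine ⟨n, ?_⟩
  have := congrArg (fun g : H => ((g : Sˣ) : S)) ((hf.iterate_right n x).trans hn)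
  simpa [f] using this

namespace Matrix

variable {R : Type*} [CommRing R]

theorem lie_lie_lie_fin_two (A Z : Matrix (Fin 2) (Fin 2) R) :
    ⁅A, ⁅A, ⁅A, Z⁆⁆⁆ = A.discr • ⁅A, Z⁆ := by
  simp only [Ring.lie_def, discr_fin_two]
  ext i j
  fin_cases i <;> fin_cases j <;>
    simp [mul_apply, Fin.sum_univ_two, det_fin_two, trace_fin_two] <;> ring

theorem discr_eq_zero_of_forall_exists_iterate_lie_eq_zero [NoZeroDivisors R]
    {A : Matrix (Fin 2) (Fin 2) R}
    (h : ∀ Z : Matrix (Fin 2) (Fin 2) R, ∃ n, (fun W => ⁅A, W⁆)^[n] Z = 0) : A.discr = 0 := by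
  by_contra hδ
  have lie_smul (t : R) (W : Matrix (Fin 2) (Fin 2) R) : ⁅A, t • W⁆ = t • ⁅A, W⁆ := by
    simp only [Ring.lie_def, mul_smul_comm, smul_mul_assoc, smul_sub]
  have iterate_odd (m : ℕ) (Z : Matrix (Fin 2) (Fin 2) R) :
      (fun W => ⁅A, W⁆)^[2 * m + 1] Z = A.discr ^ m • ⁅A, Z⁆ := by
    induction m with
    | zero => simp
    | succ m ih =>
      rw [show 2 * (m + 1) + 1 = 2 + (2 * m + 1) by ring, Function.iterate_add_apply, ih]
      change ⁅A, ⁅A, A.discr ^ m • ⁅A, Z⁆⁆⁆ = _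
      rw [lie_smul, lie_smul, lie_lie_lie_fin_two, smul_smul, pow_succ]
  have central (Z : Matrix (Fin 2) (Fin 2) R) : ⁅A, Z⁆ = 0 := by
    obtain ⟨n, hn⟩ := h Z
    have hvanish : (fun W => ⁅A, W⁆)^[2 * n + 1] Z = 0 := by
      rw [show 2 * n + 1 = (n + 1) + n by ring, Function.iterate_add_apply, hn]
      exact Function.iterate_fixed (by simp [Ring.lie_def]) _
    rw [iterate_odd] at hvanish
    exact (smul_eq_zero.mp hvanish).resolve_left (pow_ne_zero n hδ)
  obtain ⟨r, rfl⟩ : A ∈ Set.range (scalar (Fin 2)) := mem_range_scalar_iff_commute_single'.mpr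
    fun i j => (sub_eq_zero.mp ((Ring.lie_def _ _).symm.trans (central _))).symm
  exact hδ (by simp [discr_fin_two]; ring)

theorem GeneralLinearGroup.discr_eq_zero_of_forall_exists_iterate_conjSub_eq_zero
    [NoZeroDivisors R] (A : GL (Fin 2) R)
    (h : ∀ Z : Matrix (Fin 2) (Fin 2) R, ∃ n, (Units.conjSub A)^[n] Z = 0) :
    (A : Matrix (Fin 2) (Fin 2) R).discr = 0 :=
  discr_eq_zero_of_forall_exists_iterate_lie_eq_zero fun Z => by
    obtain ⟨n, hn⟩ := h Z
    rw [Units.iterate_conjSub] at hn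
    exact ⟨n, (Units.mul_left_eq_zero _).mp hn⟩

theorem isSquare_det_of_discr_eq_zero {F : Type*} [Field F] [NeZero (2 : F)]
    {A : Matrix (Fin 2) (Fin 2) F} (h : A.discr = 0) : IsSquare A.det :=
  ⟨A.trace / 2, by rw [discr_fin_two, sub_eq_zero] at h; field_simp; linear_combination -h⟩

theorem GeneralLinearGroup.not_isNilpotent_fin_two (h2 : ¬ IsNilpotent (2 : R)) :
    ¬ Group.IsNilpotent (GL (Fin 2) R) := by
  intro _
  have hb : !![1, 0; 0, -1] * !![1, 0; 0, -1] = (1 : Matrix (Fin 2) (Fin 2) R) := by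
    simp [one_fin_two]
  let b : GL (Fin 2) R := ⟨!![1, 0; 0, -1], !![1, 0; 0, -1], hb, hb⟩
  have hconj : Function.Semiconj (upperRightHom (R := R)) (-2 * ·) (fun g => ⁅b, g⁆) :=
    fun x => by
      refine Units.ext ?_
      simp [b, commutatorElement_def]
      ring
  obtain ⟨n, hn⟩ := Group.IsNilpotent.exists_iterate_commutatorElement_eq_one b (upperRightHom 1)
  rw [← hconj.iterate_right] at hn
  simp only [mul_left_iterate, mul_one] at hn
  rw [← AddChar.map_zero_eq_one upperRightHom] at hn
  exact h2 (isNilpotent_neg_iff.mp ⟨n, injective_upperRightHom hn⟩)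

end Matrix

namespace ZMod

theorem castHom_eq_zero_of_natCast_mul_eq_zero {m n : ℕ} (hm : m ≠ 0) {y : ZMod (m * n)}
    (h : (m : ZMod (m * n)) * y = 0) : castHom (dvd_mul_left n m) (ZMod n) y = 0 := by
  rw [← intCast_zmod_cast y] at h ⊢
  rw [← Int.cast_natCast, ← Int.cast_mul, intCast_zmod_eq_zero_iff_dvd, Nat.cast_mul] at h
  rw [map_intCast, intCast_zmod_eq_zero_iff_dvd]
  exact Int.dvd_of_mul_dvd_mul_left (by exact_mod_cast hm) h

theorem exists_unit_not_isSquare_castHom {n p : ℕ} [NeZero n] [Fact p.Prime] (hp2 : p ≠ 2)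
    (h : p ∣ n) : ∃ v : (ZMod n)ˣ, ¬ IsSquare (castHom h (ZMod p) v) := by
  obtain ⟨a, ha⟩ := FiniteField.exists_nonsquare (F := ZMod p) (by rwa [ringChar_zmod_n])
  have ha0 : a ≠ 0 := by rintro rfl; exact ha ⟨0, by simp⟩
  obtain ⟨v, hv⟩ := unitsMap_surjective h (Units.mk0 a ha0)
  refine ⟨v, ?_⟩
  rwa [← Units.val_mk0 ha0, ← hv, unitsMap_def] at ha

end ZMod

/-- Here `m` plays the role of `p ^ (k - 1)`, so that `ZMod (m * p)` is `ℤ/p^kℤ`. -/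
theorem isSquare_castHom_det_of_isNilpotent {m p : ℕ} [Fact p.Prime] (hp2 : p ≠ 2) (hm : m ≠ 0)
    (hpm : p ∣ m) {H : Subgroup (GL (Fin 2) (ZMod (m * p)))} [hnil : Group.IsNilpotent H]
    (hH : ∀ M : GL (Fin 2) (ZMod (m * p)),
      (M : Matrix (Fin 2) (Fin 2) (ZMod (m * p))).map
        (ZMod.castHom (dvd_mul_right m p) (ZMod m)) = 1 → M ∈ H)
    {B : GL (Fin 2) (ZMod (m * p))} (hB : B ∈ H) :
    IsSquare (ZMod.castHom (dvd_mul_left p m) (ZMod p)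
      (B : Matrix (Fin 2) (Fin 2) (ZMod (m * p))).det) := by
  have hc : (m : ZMod (m * p)) * m = 0 := by
    rw [← Nat.cast_mul, ZMod.natCast_eq_zero_iff]
    exact mul_dvd_mul_left m hpm
  have hcongr (X : Matrix (Fin 2) (Fin 2) (ZMod (m * p))) : Units.oneAddSMul hc X ∈ H :=
    hH _ (by ext i j; by_cases hij : i = j <;> simp [one_apply, hij])
  set ψ := ZMod.castHom (dvd_mul_left p m) (ZMod p)
  set φ := ψ.mapMatrix (m := Fin 2)
  set A : GL (Fin 2) (ZMod p) := Units.map (φ : _ →* _) B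
  have hA : (A : Matrix (Fin 2) (Fin 2) (ZMod p)).discr = 0 := by
    refine A.discr_eq_zero_of_forall_exists_iterate_conjSub_eq_zero fun Z => ?_
    obtain ⟨X, rfl⟩ : ∃ X, φ X = Z :=
      ⟨Z.map (Function.surjInv (ZMod.ringHom_surjective ψ)), by
        ext; exact Function.surjInv_eq (ZMod.ringHom_surjective ψ) _⟩
    obtain ⟨n, hn⟩ := exists_smul_iterate_conjSub_eq_zero hc hcongr hB X
    refine ⟨n, ?_⟩
    rw [← (Units.semiconj_conjSub φ B).iterate_right]
    ext i j
    exact ZMod.castHom_eq_zero_of_natCast_mul_eq_zero hm (by simpa using congr_fun₂ hn i j)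
  have : NeZero (2 : ZMod p) := ⟨Ring.two_ne_zero (by rwa [ZMod.ringChar_zmod_n])⟩
  rw [RingHom.map_det]
  exact isSquare_det_of_discr_eq_zero hA

/-- Let `p` be an odd prime, `k` a positive integer, and `H` a nilpotent subgroup of
`GL₂(ℤ/p^kℤ)` containing every matrix whose reduction modulo `p^(k-1)` is the identity.
Then the determinant of every element of `H` reduces to a square modulo `p`; in particular
`det : H → (ℤ/p^kℤ)ˣ` is not surjective. -/
theorem det_not_surjective_of_nilpotent (p k : ℕ) (hp : p.Prime) (hodd : Odd p) (hk : 0 < k)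
    (H : Subgroup (GL (Fin 2) (ZMod (p ^ k))))
    (hnil : Group.IsNilpotent H)
    (hfull : ∀ M : GL (Fin 2) (ZMod (p ^ k)),
      (M : Matrix (Fin 2) (Fin 2) (ZMod (p ^ k))).map
          (ZMod.castHom (pow_dvd_pow p (Nat.sub_le k 1)) (ZMod (p ^ (k - 1)))) = 1 →
        M ∈ H) :
    (∀ B ∈ H, IsSquare (ZMod.castHom (dvd_pow_self p hk.ne') (ZMod p)
        (Matrix.det (B : Matrix (Fin 2) (Fin 2) (ZMod (p ^ k)))))) ∧
      ¬ Function.Surjective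
          (fun B : H => Matrix.GeneralLinearGroup.det (B : GL (Fin 2) (ZMod (p ^ k)))) := by
  have : Fact p.Prime := ⟨hp⟩
  have hp2 : p ≠ 2 := by rintro rfl; exact Nat.not_odd_iff_even.mpr even_two hodd
  have hsq : ∀ B ∈ H, IsSquare (ZMod.castHom (dvd_pow_self p hk.ne') (ZMod p)
      (Matrix.det (B : Matrix (Fin 2) (Fin 2) (ZMod (p ^ k))))) := by
    obtain ⟨j, rfl⟩ : ∃ j, k = j + 1 := ⟨k - 1, by omega⟩
    rcases j with _ | j
    · have hGL : Group.IsNilpotent (GL (Fin 2) (ZMod (p ^ 1))) :=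
        Group.nilpotent_of_surjective H.subtype fun M =>
          ⟨⟨M, hfull M (by ext; exact Subsingleton.elim (α := ZMod 1) _ _)⟩, rfl⟩
      have : Fact (p ^ 1).Prime := ⟨by rwa [pow_one]⟩
      refine absurd hGL (GeneralLinearGroup.not_isNilpotent_fin_two ?_)
      rw [isNilpotent_iff_eq_zero]
      exact Ring.two_ne_zero (by rwa [ZMod.ringChar_zmod_n, pow_one])
    · intro B hB
      exact isSquare_castHom_det_of_isNilpotent hp2 (pow_ne_zero _ hp.ne_zero)
        (dvd_pow_self p j.succ_ne_zero) (hnil := hnil) hfull hB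
  refine ⟨hsq, fun hsurj => ?_⟩
  have : NeZero (p ^ k) := ⟨pow_ne_zero k hp.ne_zero⟩
  obtain ⟨v, hv⟩ := ZMod.exists_unit_not_isSquare_castHom hp2 (dvd_pow_self p hk.ne')
  obtain ⟨B, rfl⟩ := hsurj v
  exact hv (hsq B B.2)
end

section
/- Let p be an odd prime, g and k positive integers, and let Ω be the 2g×2g block matrix [[0, -I_g],[I_g, 0]] over ℤ/p^kℤ. Suppose H is a nilpotent subgroup of GL_{2g}(ℤ/p^kℤ) such that (i) every M ∈ H satisfies Mᵀ Ω M = λ Ω for some unit λ ∈ (ℤ/p^kℤ)ˣ, and (ii) H contains every matrix M ∈ GL_{2g}(ℤ/p^kℤ) satisfying Mᵀ Ω M = λ Ω for some unit λ whose reduction modulo p^{k-1} is the identity. Then for every M ∈ H and every unit λ with Mᵀ Ω M = λ Ω, the reduction of λ modulo p is a square in ℤ/pℤ; in particular, the multiplier map M ↦ λ on H does not surject onto (ℤ/p^kℤ)ˣ. -/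
/-!
Put `ε = p ^ (k - 1)`. If `k ≥ 2` then `ε² = 0`, so for every symmetric `S` the matrix
`1 + ε S Ω` is a similitude of multiplier `1` that is trivial modulo `p ^ (k - 1)`, hence lies in
`H`. Its commutator with `M ∈ H` of multiplier `λ` is `1 + ε S' Ω` with `S' = S - λ⁻¹ M S Mᵀ`, so
nilpotency of `H` gives `(1 - T) ^ n S ≡ 0 (mod p)` for `T S = λ⁻¹ M S Mᵀ`. In characteristic `p`
this forces `T ^ (p ^ n) S = S`, and the diagonal entry `(i, i)` of this identity for `S = E_ii`
reads `λ⁻¹ (M ^ (p ^ n))ᵢᵢ² = 1` modulo `p`.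

If `k = 1`, reduction modulo `p ^ 0` is trivial and `H` contains every similitude, in particular the
shear `[[1, 1], [0, 1]]` and `diag(-1, 1)`, which conjugates the shear to its inverse. Iterated
commutators, via `⁅x ^ m, y⁆ = x ^ (2 * m)`, make the shear `x` satisfy `x ^ (2 ^ n) = 1`, i.e.
`2 ^ n = 0` modulo `p`, which is impossible for odd `p`.
-/

open scoped Matrix

/-- The standard symplectic form `Ω = [[0, -I_g], [I_g, 0]]` over `ℤ/Nℤ`. -/
def symplecticForm (g N : ℕ) : Matrix (Fin g ⊕ Fin g) (Fin g ⊕ Fin g) (ZMod N) :=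
  Matrix.fromBlocks 0 (-1) 1 0

open scoped commutatorElement

namespace Subgroup

variable {G : Type*} [Group G] {S : Subgroup G}

theorem exists_iterate_commutator_eq_one [Group.IsNilpotent S] {V : Type*} {s : Set V}
    {f : V → G} {σ : V → V} {y : G} (hy : y ∈ S) (hfS : ∀ v ∈ s, f v ∈ S)
    (hσ : Set.MapsTo σ s s) (hf : ∀ v ∈ s, ⁅f v, y⁆ = f (σ v)) :
    ∃ n, ∀ v ∈ s, f (σ^[n] v) = 1 := by
  obtain ⟨n, hn⟩ := (isNilpotent_iff_lowerCentralSeries S).1 ‹_›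
  have key : ∀ j, ∀ v ∈ s, f (σ^[j] v) ∈ S.lowerCentralSeries j := by
    intro j
    induction j with
    | zero => exact hfS
    | succ j ih =>
      intro v hv
      rw [Function.iterate_succ_apply', ← hf _ (hσ.iterate j hv)]
      exact commutator_mem_commutator (ih v hv) hy
  exact ⟨n, fun v hv => by simpa [hn] using key n v hv⟩

theorem exists_pow_two_pow_eq_one [Group.IsNilpotent S] {x y : G} (hx : x ∈ S) (hy : y ∈ S)
    (hyx : y * x * y⁻¹ = x⁻¹) : ∃ n, x ^ 2 ^ n = 1 := by
  have hcomm : ∀ m : ℕ, ⁅x ^ m, y⁆ = x ^ (2 * m) := fun m => by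
    rw [commutatorElement_def, mul_assoc _ y, mul_assoc, ← inv_pow, ← conj_pow, ← conj_inv,
      hyx, inv_inv, ← pow_add, two_mul]
  obtain ⟨n, hn⟩ := exists_iterate_commutator_eq_one (s := Set.univ)
    (f := fun j : ℕ => x ^ 2 ^ j) (σ := Nat.succ) hy (fun j _ => pow_mem hx _) (Set.mapsTo_univ _ _)
    (fun j _ => by rw [hcomm, ← pow_succ'])
  exact ⟨n, by simpa [Nat.succ_iterate] using hn 0 trivial⟩

end Subgroup

namespace Matrix

variable {ι R : Type*} [Fintype ι] [DecidableEq ι] [CommRing R]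

def scaledCongr (a : R) (P : Matrix ι ι R) : Module.End R (Matrix ι ι R) :=
  a • (LinearMap.mulLeft R P * LinearMap.mulRight R Pᵀ)

theorem scaledCongr_apply (a : R) (P S : Matrix ι ι R) :
    scaledCongr a P S = a • (P * S * Pᵀ) := by
  simp [scaledCongr, mul_assoc]

theorem scaledCongr_pow (a : R) (P : Matrix ι ι R) (n : ℕ) :
    scaledCongr a P ^ n = scaledCongr (a ^ n) (P ^ n) := by
  rw [scaledCongr, smul_pow, (LinearMap.commute_mulLeft_right P Pᵀ).mul_pow,
    LinearMap.pow_mulLeft, LinearMap.pow_mulRight, ← transpose_pow, scaledCongr]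

theorem map_pow_one_sub_scaledCongr_apply {R' : Type*} [CommRing R'] (f : R →+* R') (a : R)
    (P S : Matrix ι ι R) (n : ℕ) :
    (((1 - scaledCongr a P) ^ n) S).map f = ((1 - scaledCongr (f a) (P.map f)) ^ n) (S.map f) := by
  induction n with
  | zero => rfl
  | succ n ih =>
    simp only [pow_succ', Module.End.mul_apply, LinearMap.sub_apply, Module.End.one_apply,
      scaledCongr_apply, ← ih]
    simp [Matrix.map_sub, Matrix.map_smul', Matrix.map_mul, Matrix.transpose_map]

theorem transpose_scaledCongr_apply {a : R} (P : Matrix ι ι R) {S : Matrix ι ι R}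
    (hS : Sᵀ = S) : (scaledCongr a P S)ᵀ = scaledCongr a P S := by
  rw [scaledCongr_apply, transpose_smul, transpose_mul, transpose_mul, transpose_transpose, hS,
    mul_assoc]

def infinitesimal (ε : R) (J S : Matrix ι ι R) : Matrix ι ι R := 1 + ε • (S * J)

variable {ε : R} {J : Matrix ι ι R}

theorem infinitesimal_add (hε : ε * ε = 0) (S T : Matrix ι ι R) :
    infinitesimal ε J (S + T) = infinitesimal ε J S * infinitesimal ε J T := by
  simp only [infinitesimal, add_mul, mul_add, one_mul, mul_one, smul_mul_assoc, mul_smul_comm,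
    smul_smul, hε, zero_smul, add_zero, smul_add]
  abel

def infinitesimalUnit (hε : ε * ε = 0) (J S : Matrix ι ι R) : GL ι R where
  val := infinitesimal ε J S
  inv := infinitesimal ε J (-S)
  val_inv := by
    rw [← infinitesimal_add hε, add_neg_cancel, infinitesimal, zero_mul, smul_zero, add_zero]
  inv_val := by
    rw [← infinitesimal_add hε, neg_add_cancel, infinitesimal, zero_mul, smul_zero, add_zero]

theorem transpose_mul_mul_infinitesimal (hε : ε * ε = 0) (hJ : Jᵀ = -J) {S : Matrix ι ι R}
    (hS : Sᵀ = S) : (infinitesimal ε J S)ᵀ * J * infinitesimal ε J S = J := by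
  simp only [infinitesimal, transpose_add, transpose_one, transpose_smul, transpose_mul, hJ, hS,
    add_mul, mul_add, one_mul, mul_one, smul_mul_assoc, mul_smul_comm, smul_smul, hε, zero_smul,
    neg_mul, smul_neg, mul_assoc, smul_add]
  abel

theorem mul_infinitesimal_mul_inv {M : GL ι R} {lam : Rˣ}
    (hM : (M : Matrix ι ι R)ᵀ * J * M = (lam : R) • J) (S : Matrix ι ι R) :
    M * infinitesimal ε J S * (↑M⁻¹ : Matrix ι ι R) =
      infinitesimal ε J (scaledCongr (↑lam⁻¹ : R) M S) := by
  have hJM : J * (↑M⁻¹ : Matrix ι ι R) = (↑lam⁻¹ : R) • ((M : Matrix ι ι R)ᵀ * J) := by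
    calc J * (↑M⁻¹ : Matrix ι ι R) = ((↑lam⁻¹ : R) • (lam : R) • J) * ↑M⁻¹ := by
          rw [smul_smul, Units.inv_mul, one_smul]
      _ = (↑lam⁻¹ : R) • ((M : Matrix ι ι R)ᵀ * J) := by
          rw [← hM, smul_mul_assoc, Matrix.mul_assoc _ (M : Matrix ι ι R), Units.mul_inv,
            mul_one]
  rw [infinitesimal, infinitesimal, scaledCongr_apply, mul_add, add_mul, mul_one, Units.mul_inv,
    mul_smul_comm, smul_mul_assoc, Matrix.mul_assoc, Matrix.mul_assoc, hJM]
  simp [Matrix.mul_assoc, smul_smul]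

theorem commutator_infinitesimalUnit (hε : ε * ε = 0) {M : GL ι R} {lam : Rˣ}
    (hM : (M : Matrix ι ι R)ᵀ * J * M = (lam : R) • J) (S : Matrix ι ι R) :
    ⁅infinitesimalUnit hε J S, M⁆ =
      infinitesimalUnit hε J (S - scaledCongr (↑lam⁻¹ : R) M S) := by
  ext1
  change infinitesimal ε J S * M * infinitesimal ε J (-S) * (↑M⁻¹ : Matrix ι ι R) = _
  rw [mul_assoc, mul_assoc, ← mul_assoc (M : Matrix ι ι R), mul_infinitesimal_mul_inv hM,
    ← infinitesimal_add hε, map_neg, ← sub_eq_add_neg]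
  rfl

theorem map_infinitesimal_eq_one {R' : Type*} [CommRing R'] {f : R →+* R'} (hf : f ε = 0)
    (S : Matrix ι ι R) : (infinitesimal ε J S).map f = 1 := by
  simp [infinitesimal, Matrix.map_add, Matrix.map_smul', hf]

theorem smul_eq_zero_of_infinitesimal_eq_one (hJ : J * J = -1) {S : Matrix ι ι R}
    (h : infinitesimal ε J S = 1) : ε • S = 0 := by
  have h' : ε • (S * J) = 0 := by simpa [infinitesimal] using h
  simpa [smul_mul_assoc, Matrix.mul_assoc, hJ] using congrArg (· * J) h'

end Matrix

theorem Module.End.pow_char_pow_apply_eq_self {K V : Type*} [Field K] (p : ℕ) [Fact p.Prime]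
    [CharP K p] [AddCommGroup V] [Module K V] {T : Module.End K V} {n : ℕ} {v : V}
    (h : ((1 - T) ^ n) v = 0) : (T ^ p ^ n) v = v := by
  nontriviality V
  have : CharP (Module.End K V) p := charP_of_injective_algebraMap' K p
  have hn : n ≤ p ^ n := (Nat.lt_pow_self (Fact.out : p.Prime).one_lt).le
  have hpow : (1 - T) ^ p ^ n = 1 - T ^ p ^ n := by
    rw [sub_pow_char_pow_of_commute _ _ (Commute.one_left T), one_pow]
  have hvanish : ((1 - T) ^ p ^ n) v = 0 := by
    rw [← Nat.sub_add_cancel hn, pow_add, Module.End.mul_apply, h, map_zero]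
  rw [hpow, LinearMap.sub_apply, Module.End.one_apply, sub_eq_zero] at hvanish
  exact hvanish.symm

theorem ZMod.mul_sq_eq_one_of_pow_one_sub_scaledCongr {p : ℕ} [Fact p.Prime] {ι : Type*}
    [Fintype ι] [DecidableEq ι] {a : ZMod p} {P : Matrix ι ι (ZMod p)} {i : ι} {n : ℕ}
    (h : ((1 - Matrix.scaledCongr a P) ^ n) (Matrix.single i i 1) = 0) :
    a * (P ^ p ^ n) i i ^ 2 = 1 := by
  have hfix := Module.End.pow_char_pow_apply_eq_self p h
  rw [Matrix.scaledCongr_pow, Matrix.scaledCongr_apply, ZMod.pow_card_pow] at hfix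
  simpa [Matrix.mul_apply, Matrix.single_apply, ite_and, ← Matrix.transpose_pow, sq]
    using congrFun₂ hfix i i

open Matrix in
theorem isSquare_map_multiplier_of_isNilpotent {ι R : Type*} [Fintype ι] [DecidableEq ι]
    [Nonempty ι] [CommRing R] {p : ℕ} [Fact p.Prime] {π : R →+* ZMod p} {ε : R}
    (hε : ε * ε = 0) (hπ : ∀ x, ε * x = 0 → π x = 0) {J : Matrix ι ι R}
    (hJJ : J * J = -1) {H : Subgroup (GL ι R)} [Group.IsNilpotent H]
    (hinf : ∀ S : Matrix ι ι R, Sᵀ = S → infinitesimalUnit hε J S ∈ H) {M : GL ι R}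
    (hMH : M ∈ H) {lam : Rˣ} (hM : (M : Matrix ι ι R)ᵀ * J * M = (lam : R) • J) :
    IsSquare (π lam) := by
  obtain ⟨i⟩ := ‹Nonempty ι›
  set C := scaledCongr (↑lam⁻¹ : R) (M : Matrix ι ι R)
  obtain ⟨n, hn⟩ := Subgroup.exists_iterate_commutator_eq_one (s := {S | Sᵀ = S})
    (f := infinitesimalUnit hε J) (σ := ⇑(1 - C)) hMH hinf
    (fun S (hS : Sᵀ = S) => by simp [transpose_sub, hS, transpose_scaledCongr_apply, C])
    (fun S _ => commutator_infinitesimalUnit hε hM S)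
  have hzero : (((1 - C) ^ n) (single i i 1)).map π = 0 := by
    have hone := hn (single i i 1) (transpose_single i i 1)
    rw [← Module.End.coe_pow] at hone
    have hsmul := smul_eq_zero_of_infinitesimal_eq_one hJJ (congrArg Units.val hone)
    ext a b
    exact hπ _ (congrFun₂ hsmul a b)
  rw [map_pow_one_sub_scaledCongr_apply, map_single, map_one] at hzero
  have hsq := ZMod.mul_sq_eq_one_of_pow_one_sub_scaledCongr hzero
  refine ⟨((M : Matrix ι ι R).map π ^ p ^ n) i i, ?_⟩
  calc π lam = π lam * (π ↑lam⁻¹ * ((M : Matrix ι ι R).map π ^ p ^ n) i i ^ 2) := by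
        rw [hsq, mul_one]
    _ = _ := by rw [← mul_assoc, ← map_mul, Units.mul_inv, map_one, one_mul, sq]

namespace Matrix

variable {m R : Type*} [Fintype m] [DecidableEq m] [CommRing R]

def blockShear : GL (m ⊕ m) R where
  val := fromBlocks 1 1 0 1
  inv := fromBlocks 1 (-1) 0 1
  val_inv := by simp [fromBlocks_multiply]
  inv_val := by simp [fromBlocks_multiply]

def blockReflection : GL (m ⊕ m) R where
  val := fromBlocks (-1) 0 0 1
  inv := fromBlocks (-1) 0 0 1
  val_inv := by simp [fromBlocks_multiply]
  inv_val := by simp [fromBlocks_multiply]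

theorem blockReflection_mul_blockShear_mul_inv :
    (blockReflection : GL (m ⊕ m) R) * blockShear * blockReflection⁻¹ = blockShear⁻¹ := by
  ext1
  simp [blockReflection, blockShear, fromBlocks_multiply]

theorem coe_blockShear_pow (n : ℕ) :
    ((blockShear ^ n : GL (m ⊕ m) R) : Matrix (m ⊕ m) (m ⊕ m) R) =
      fromBlocks 1 (n : Matrix m m R) 0 1 := by
  induction n with
  | zero => simp
  | succ n ih =>
    rw [pow_succ, Units.val_mul, ih]
    simp [blockShear, fromBlocks_multiply, add_comm]

theorem exists_two_pow_eq_zero_of_isNilpotent [Nonempty m] {H : Subgroup (GL (m ⊕ m) R)}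
    [Group.IsNilpotent H] (hx : blockShear ∈ H) (hy : blockReflection ∈ H) :
    ∃ n, (2 : R) ^ n = 0 := by
  obtain ⟨i⟩ := ‹Nonempty m›
  obtain ⟨n, hn⟩ :=
    Subgroup.exists_pow_two_pow_eq_one hx hy blockReflection_mul_blockShear_mul_inv
  have hmat := congrArg Units.val hn
  rw [coe_blockShear_pow, Units.val_one, ← fromBlocks_one] at hmat
  have hentry := congrFun₂ (fromBlocks_inj.mp hmat).2.1 i i
  rw [natCast_apply, if_pos rfl, zero_apply] at hentry
  exact ⟨n, by exact_mod_cast hentry⟩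

end Matrix

section symplecticForm

open Matrix

variable {g N : ℕ}

theorem transpose_symplecticForm : (symplecticForm g N)ᵀ = -symplecticForm g N := by
  simp [symplecticForm, fromBlocks_transpose, fromBlocks_neg]

theorem symplecticForm_mul_self : symplecticForm g N * symplecticForm g N = -1 := by
  simp [symplecticForm, fromBlocks_multiply, ← fromBlocks_one, fromBlocks_neg]

theorem transpose_blockShear_mul_symplecticForm_mul :
    ((blockShear : GL (Fin g ⊕ Fin g) (ZMod N)) :
        Matrix (Fin g ⊕ Fin g) (Fin g ⊕ Fin g) (ZMod N))ᵀ * symplecticForm g N *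
      (blockShear : GL (Fin g ⊕ Fin g) (ZMod N)) = symplecticForm g N := by
  simp [symplecticForm, blockShear, fromBlocks_transpose, fromBlocks_multiply]

theorem transpose_blockReflection_mul_symplecticForm_mul :
    ((blockReflection : GL (Fin g ⊕ Fin g) (ZMod N)) :
        Matrix (Fin g ⊕ Fin g) (Fin g ⊕ Fin g) (ZMod N))ᵀ * symplecticForm g N *
      (blockReflection : GL (Fin g ⊕ Fin g) (ZMod N)) = (-1 : ZMod N) • symplecticForm g N := by
  simp [symplecticForm, blockReflection, fromBlocks_transpose, fromBlocks_multiply, fromBlocks_neg]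

end symplecticForm

namespace ZMod

variable {p k : ℕ}

theorem pow_pred_mul_self_eq_zero (hk : 2 ≤ k) :
    (p : ZMod (p ^ k)) ^ (k - 1) * (p : ZMod (p ^ k)) ^ (k - 1) = 0 := by
  rw [← pow_add, ← Nat.cast_pow, natCast_eq_zero_iff]
  exact pow_dvd_pow p (by omega)

theorem castHom_pow_pred_eq_zero :
    castHom (pow_dvd_pow p (Nat.sub_le k 1)) (ZMod (p ^ (k - 1)))
      ((p : ZMod (p ^ k)) ^ (k - 1)) = 0 := by
  rw [map_pow, map_natCast, ← Nat.cast_pow, natCast_self]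

theorem castHom_eq_zero_of_pow_pred_mul_eq_zero (hp : p ≠ 0) (hk : k ≠ 0) {x : ZMod (p ^ k)}
    (h : (p : ZMod (p ^ k)) ^ (k - 1) * x = 0) : castHom (dvd_pow_self p hk) (ZMod p) x = 0 := by
  have : NeZero (p ^ k) := ⟨pow_ne_zero k hp⟩
  rw [← natCast_zmod_val x, ← Nat.cast_pow, ← Nat.cast_mul, natCast_eq_zero_iff] at h
  rw [← natCast_zmod_val x, map_natCast, natCast_eq_zero_iff]
  have hpk : p ^ k = p ^ (k - 1) * p := by rw [← pow_succ, Nat.sub_add_cancel (by omega)]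
  generalize x.val = v at h ⊢
  rw [hpk] at h
  exact Nat.dvd_of_mul_dvd_mul_left (pow_pos (Nat.pos_of_ne_zero hp) _) h

theorem two_pow_ne_zero (hp : 1 < p) (hodd : Odd p) (hk : k ≠ 0) (n : ℕ) :
    (2 : ZMod (p ^ k)) ^ n ≠ 0 := by
  have : Fact (1 < p ^ k) := ⟨Nat.one_lt_pow hk hp⟩
  have h2 : IsUnit (2 : ZMod (p ^ k)) := by
    exact_mod_cast (isUnit_iff_coprime 2 (p ^ k)).mpr (Nat.coprime_two_left.mpr hodd.pow)
  exact (h2.pow n).ne_zero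

theorem exists_unit_not_isSquare_castHom_s12 (hp : p.Prime) (hodd : Odd p) (hk : k ≠ 0) :
    ∃ u : (ZMod (p ^ k))ˣ, ¬IsSquare (castHom (dvd_pow_self p hk) (ZMod p) u) := by
  have : Fact p.Prime := ⟨hp⟩
  have : NeZero (p ^ k) := ⟨pow_ne_zero k hp.ne_zero⟩
  obtain ⟨a, ha⟩ := FiniteField.exists_nonsquare (F := ZMod p)
    (by rw [ringChar_zmod_n]; rintro rfl; exact absurd hodd (by decide))
  have ha0 : a ≠ 0 := by rintro rfl; exact ha ⟨0, (mul_zero 0).symm⟩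
  obtain ⟨u, hu⟩ := unitsMap_surjective (dvd_pow_self p hk) (Units.mk0 a ha0)
  have hua : castHom (dvd_pow_self p hk) (ZMod p) u = a := by
    simpa [unitsMap_def] using congrArg Units.val hu
  exact ⟨u, hua ▸ ha⟩

end ZMod

theorem multiplier_not_surjective_of_nilpotent_general (p g k : ℕ) (hp : p.Prime) (hodd : Odd p)
    (hg : 0 < g) (hk : 0 < k)
    (H : Subgroup (GL (Fin g ⊕ Fin g) (ZMod (p ^ k))))
    (hnil : Group.IsNilpotent H)
    (hfull : ∀ M : GL (Fin g ⊕ Fin g) (ZMod (p ^ k)),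
      (∃ lam : (ZMod (p ^ k))ˣ,
        (M : Matrix (Fin g ⊕ Fin g) (Fin g ⊕ Fin g) (ZMod (p ^ k)))ᵀ * symplecticForm g (p ^ k) * M
          = (lam : ZMod (p ^ k)) • symplecticForm g (p ^ k)) →
      (M : Matrix (Fin g ⊕ Fin g) (Fin g ⊕ Fin g) (ZMod (p ^ k))).map
          (ZMod.castHom (pow_dvd_pow p (Nat.sub_le k 1)) (ZMod (p ^ (k - 1)))) = 1 →
        M ∈ H) :
    (∀ M ∈ H, ∀ lam : (ZMod (p ^ k))ˣ,
      (M : Matrix (Fin g ⊕ Fin g) (Fin g ⊕ Fin g) (ZMod (p ^ k)))ᵀ * symplecticForm g (p ^ k) * M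
          = (lam : ZMod (p ^ k)) • symplecticForm g (p ^ k) →
        IsSquare (ZMod.castHom (dvd_pow_self p hk.ne') (ZMod p) (lam : ZMod (p ^ k)))) ∧
      ¬ ∀ u : (ZMod (p ^ k))ˣ, ∃ M ∈ H,
        (M : Matrix (Fin g ⊕ Fin g) (Fin g ⊕ Fin g) (ZMod (p ^ k)))ᵀ * symplecticForm g (p ^ k) * M
          = (u : ZMod (p ^ k)) • symplecticForm g (p ^ k) := by
  have : Fact p.Prime := ⟨hp⟩
  have : Nonempty (Fin g) := ⟨⟨0, hg⟩⟩
  have hsq : ∀ M ∈ H, ∀ lam : (ZMod (p ^ k))ˣ,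
      (M : Matrix (Fin g ⊕ Fin g) (Fin g ⊕ Fin g) (ZMod (p ^ k)))ᵀ * symplecticForm g (p ^ k) * M
          = (lam : ZMod (p ^ k)) • symplecticForm g (p ^ k) →
        IsSquare (ZMod.castHom (dvd_pow_self p hk.ne') (ZMod p) (lam : ZMod (p ^ k))) := by
    intro M hMH lam hM
    obtain hk1 | hk2 : k = 1 ∨ 2 ≤ k := by omega
    · have : Subsingleton (ZMod (p ^ (k - 1))) := by
        rw [hk1, Nat.sub_self, pow_zero]; infer_instance
      obtain ⟨n, hn⟩ := Matrix.exists_two_pow_eq_zero_of_isNilpotent (H := H)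
        (hfull _ ⟨1, by
          rw [Units.val_one, one_smul]; exact transpose_blockShear_mul_symplecticForm_mul⟩
          (Subsingleton.elim _ _))
        (hfull _ ⟨-1, by
          rw [Units.val_neg, Units.val_one]; exact transpose_blockReflection_mul_symplecticForm_mul⟩
          (Subsingleton.elim _ _))
      exact absurd hn (ZMod.two_pow_ne_zero hp.one_lt hodd hk.ne' n)
    · have hε := ZMod.pow_pred_mul_self_eq_zero (p := p) hk2
      refine isSquare_map_multiplier_of_isNilpotent hε
        (fun x => ZMod.castHom_eq_zero_of_pow_pred_mul_eq_zero hp.ne_zero hk.ne')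
        symplecticForm_mul_self (fun S hS => hfull _ ⟨1, ?_⟩ ?_) hMH hM
      · rw [Units.val_one, one_smul]
        exact Matrix.transpose_mul_mul_infinitesimal hε transpose_symplecticForm hS
      · exact Matrix.map_infinitesimal_eq_one ZMod.castHom_pow_pred_eq_zero S
  refine ⟨hsq, fun hsurj => ?_⟩
  obtain ⟨u, hu⟩ := ZMod.exists_unit_not_isSquare_castHom_s12 hp hodd hk.ne'
  obtain ⟨M, hMH, hM⟩ := hsurj u
  exact hu (hsq M hMH u hM)

/-- Let `p` be an odd prime, `g, k` positive integers and `Ω` the standard symplectic form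
over `ℤ/p^kℤ`.  If `H` is a nilpotent subgroup of `GL_{2g}(ℤ/p^kℤ)` consisting of symplectic
similitudes and containing every symplectic similitude that reduces to the identity modulo
`p^(k-1)`, then every multiplier of an element of `H` is a square modulo `p`; in particular
the multiplier map on `H` does not surject onto `(ℤ/p^kℤ)ˣ`. -/
theorem multiplier_not_surjective_of_nilpotent (p g k : ℕ) (hp : p.Prime) (hodd : Odd p)
    (hg : 0 < g) (hk : 0 < k)
    (H : Subgroup (GL (Fin g ⊕ Fin g) (ZMod (p ^ k))))
    (hnil : Group.IsNilpotent H)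
    (hGSp : ∀ M ∈ H, ∃ lam : (ZMod (p ^ k))ˣ,
      (M : Matrix (Fin g ⊕ Fin g) (Fin g ⊕ Fin g) (ZMod (p ^ k)))ᵀ * symplecticForm g (p ^ k) * M
        = (lam : ZMod (p ^ k)) • symplecticForm g (p ^ k))
    (hfull : ∀ M : GL (Fin g ⊕ Fin g) (ZMod (p ^ k)),
      (∃ lam : (ZMod (p ^ k))ˣ,
        (M : Matrix (Fin g ⊕ Fin g) (Fin g ⊕ Fin g) (ZMod (p ^ k)))ᵀ * symplecticForm g (p ^ k) * M
          = (lam : ZMod (p ^ k)) • symplecticForm g (p ^ k)) →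
      (M : Matrix (Fin g ⊕ Fin g) (Fin g ⊕ Fin g) (ZMod (p ^ k))).map
          (ZMod.castHom (pow_dvd_pow p (Nat.sub_le k 1)) (ZMod (p ^ (k - 1)))) = 1 →
        M ∈ H) :
    (∀ M ∈ H, ∀ lam : (ZMod (p ^ k))ˣ,
      (M : Matrix (Fin g ⊕ Fin g) (Fin g ⊕ Fin g) (ZMod (p ^ k)))ᵀ * symplecticForm g (p ^ k) * M
          = (lam : ZMod (p ^ k)) • symplecticForm g (p ^ k) →
        IsSquare (ZMod.castHom (dvd_pow_self p hk.ne') (ZMod p) (lam : ZMod (p ^ k)))) ∧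
      ¬ ∀ u : (ZMod (p ^ k))ˣ, ∃ M ∈ H,
        (M : Matrix (Fin g ⊕ Fin g) (Fin g ⊕ Fin g) (ZMod (p ^ k)))ᵀ * symplecticForm g (p ^ k) * M
          = (u : ZMod (p ^ k)) • symplecticForm g (p ^ k) :=
  multiplier_not_surjective_of_nilpotent_general p g k hp hodd hg hk H hnil hfull
end
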